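/- arXiv:2407.20379 — 8 statements merged into one kernel-verified Lean document; each statement's English description precedes it below -/
import Mathlib

section
/- Let N be a positive integer and a an integer with 0 ≤ a ≤ (N−1)/2. Then the space C_a contains a nonzero function if and only if 4a + 2 > N (equivalently, a ≥ (N−1)/4). -/
open Complex

/-- The (non-normalized) discrete Fourier transform on `ZMod N`:
`(dft N f) k = ∑_{j=0}^{N-1} exp(-2πi j k / N) f(j)`. -/
noncomputable def dft (N : ℕ) (f : ZMod N → ℂ) : ZMod N → ℂ := fun k =>
  ∑ j ∈ Finset.range N,
    Complex.exp (-(2 * Real.pi * Complex.I * (j : ℂ) * (k.val : ℂ)) / (N : ℂ)) * f (j : ZMod N)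

/-- The discrete interval `[-a, a]`, viewed as a subset of `ZMod N`. -/
def dInterval (N : ℕ) (a : ℤ) : Set (ZMod N) := {x | ∃ j : ℤ, |j| ≤ a ∧ (j : ZMod N) = x}

/-- The discrete Fourier transform as a linear map. -/
noncomputable def dftL (N : ℕ) : (ZMod N → ℂ) →ₗ[ℂ] (ZMod N → ℂ) where
  toFun f := dft N f
  map_add' f g := by
    funext k
    simp only [dft, Pi.add_apply, mul_add]
    rw [Finset.sum_add_distrib]
  map_smul' c f := by
    funext k
    simp only [dft, Pi.smul_apply, smul_eq_mul, RingHom.id_apply]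
    rw [Finset.mul_sum]
    exact Finset.sum_congr rfl fun j _ => by ring

/-- The subspace `L²(S)` of functions on `ZMod N` vanishing outside `S`. -/
noncomputable def supportedIn (N : ℕ) (S : Set (ZMod N)) : Submodule ℂ (ZMod N → ℂ) where
  carrier := {f | ∀ x ∉ S, f x = 0}
  add_mem' := by
    intro f g hf hg x hx
    simp [hf x hx, hg x hx]
  zero_mem' := by
    intro x _
    rfl
  smul_mem' := by
    intro c f hf x hx
    simp [hf x hx]

/-- The space `C_a` of functions supported in `[-a,a]` whose Fourier transform is
also supported in `[-a,a]`. -/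
noncomputable def Ca (N : ℕ) (a : ℤ) : Submodule ℂ (ZMod N → ℂ) :=
  supportedIn N (dInterval N a) ⊓ Submodule.comap (dftL N) (supportedIn N (dInterval N a))

/-!
Write `ψ` for the standard additive character of `ℤ/Nℤ`, so that `F_N f k = ∑ₓ ψ(-xk) f x`.
If `f` vanishes outside `[-b, b]`, then `F_N f k` is, up to the unit `ψ(-bk)`, the value at `ψ(-k)`
of the polynomial `P_f = ∑_{i ≤ 2b} f(i - b) Xⁱ` of degree at most `2b`. If `F_N f` also vanishes
outside `[-b, b]`, then `P_f` has the `N - (2b + 1)` distinct roots `ψ(-k)`, `k ∉ [-b, b]`; for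
`N ≥ 4b + 2` these outnumber its degree, so `P_f = 0` and `f = 0`. Conversely, the functions
supported in `[-b, b]` and those whose transform is supported there form two subspaces of
dimension `2b + 1` of an `N`-dimensional space, which meet nontrivially once `2(2b + 1) > N`.
-/

open Finset ZMod Polynomial Module

section

variable {N : ℕ}

theorem dInterval_eq_image (b : ℕ) :
    dInterval N b = (range (2 * b + 1)).image (fun i : ℕ => (i : ZMod N) - b) := by
  ext x
  simp only [dInterval, abs_le, coe_image, coe_range, Set.mem_ofPred_eq, Set.mem_image, Set.mem_Iio]
  constructor
  · rintro ⟨j, ⟨hlo, hhi⟩, rfl⟩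
    refine ⟨(j + b).toNat, by omega, ?_⟩
    rw [← Int.cast_natCast, Int.toNat_of_nonneg (by omega)]
    push_cast
    ring
  · rintro ⟨i, hi, rfl⟩
    exact ⟨i - b, ⟨by omega, by omega⟩, by push_cast; rfl⟩

theorem injOn_natCast_sub {b : ℕ} (hb : 2 * b + 1 ≤ N) :
    Set.InjOn (fun i : ℕ => (i : ZMod N) - b) (range (2 * b + 1)) := by
  intro i hi i' hi' h
  simp only [coe_range, Set.mem_Iio, sub_left_inj] at hi hi' h
  rw [← ZMod.val_cast_of_lt (by omega : i < N), h, ZMod.val_cast_of_lt (by omega)]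

theorem ncard_dInterval {b : ℕ} (hb : 2 * b + 1 ≤ N) : (dInterval N b).ncard = 2 * b + 1 := by
  rw [dInterval_eq_image, Set.ncard_coe_finset, card_image_of_injOn (injOn_natCast_sub hb),
    card_range]

noncomputable def shiftedPoly (b : ℕ) (f : ZMod N → ℂ) : ℂ[X] :=
  ∑ i ∈ range (2 * b + 1), C (f (i - b)) * X ^ i

theorem natDegree_shiftedPoly_le (b : ℕ) (f : ZMod N → ℂ) : (shiftedPoly b f).natDegree ≤ 2 * b :=
  natDegree_sum_le_of_forall_le _ _ fun _ hi =>
    (natDegree_C_mul_X_pow_le _ _).trans (Nat.le_of_lt_succ (mem_range.mp hi))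

theorem coeff_shiftedPoly {b i : ℕ} (hi : i < 2 * b + 1) (f : ZMod N → ℂ) :
    (shiftedPoly b f).coeff i = f (i - b) := by
  simp [shiftedPoly, finsetSum_coeff, hi]

theorem supportedIn_eq_ker_funLeft (S : Set (ZMod N)) :
    supportedIn N S = LinearMap.ker (LinearMap.funLeft ℂ ℂ (Subtype.val : ↥Sᶜ → ZMod N)) := by
  ext f
  simp only [LinearMap.mem_ker, funext_iff, LinearMap.funLeft_apply, Pi.zero_apply,
    Subtype.forall, Set.mem_compl_iff]
  rfl

variable [NeZero N]

theorem dft_eq_zmodDft (f : ZMod N → ℂ) : dft N f = 𝓕 f := by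
  ext k
  rw [_root_.dft, dft_apply]
  refine Finset.sum_nbij' (fun j => (j : ZMod N)) ZMod.val (fun _ _ => mem_univ _)
    (fun x _ => mem_range.mpr x.val_lt) (fun j hj => ZMod.val_cast_of_lt (mem_range.mp hj))
    (fun x _ => ZMod.natCast_zmod_val x) fun j _ => ?_
  have hjk : -((j : ZMod N) * k) = ((-(j * k.val : ℤ) : ℤ) : ZMod N) := by
    push_cast [ZMod.natCast_zmod_val]; rfl
  rw [smul_eq_mul, hjk, stdAddChar_coe]
  push_cast
  ring_nf

theorem sum_eq_sum_range_of_vanish_off_dInterval {b : ℕ} (hb : 2 * b + 1 ≤ N) {g : ZMod N → ℂ}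
    (hg : ∀ x ∉ dInterval N b, g x = 0) :
    ∑ x, g x = ∑ i ∈ range (2 * b + 1), g (i - b) := by
  rw [← sum_image (f := g) (injOn_natCast_sub hb)]
  refine (sum_subset (subset_univ _) fun x _ hx => hg x ?_).symm
  rwa [dInterval_eq_image, mem_coe]

theorem eval_shiftedPoly {b : ℕ} (hb : 2 * b + 1 ≤ N) {f : ZMod N → ℂ}
    (hf : f ∈ supportedIn N (dInterval N b)) (k : ZMod N) :
    (shiftedPoly b f).eval (stdAddChar (-k)) = stdAddChar (-((b : ZMod N) * k)) * 𝓕 f k := by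
  have hvanish : ∀ x ∉ dInterval N b, stdAddChar (-(x * k)) • f x = 0 := fun x hx => by
    rw [hf x hx, smul_zero]
  rw [dft_apply, sum_eq_sum_range_of_vanish_off_dInterval hb hvanish, mul_sum, shiftedPoly,
    eval_finsetSum]
  refine sum_congr rfl fun i _ => ?_
  rw [eval_mul, eval_C, eval_pow, eval_X, ← AddChar.map_nsmul_eq_pow, smul_eq_mul, ← mul_assoc,
    ← AddChar.map_add_eq_mul, nsmul_eq_mul, mul_comm (f _)]
  congr 2
  ring

theorem eq_zero_of_mem_Ca {b : ℕ} (hb : 4 * b + 2 ≤ N) {f : ZMod N → ℂ} (hf : f ∈ Ca N b) :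
    f = 0 := by
  classical
  obtain ⟨hf, hFf⟩ := hf
  have hb' : 2 * b + 1 ≤ N := by omega
  have hroots : ∀ k : ↥(dInterval N b)ᶜ, (shiftedPoly b f).eval (stdAddChar (-k.1)) = 0 := by
    rintro ⟨k, hk⟩
    rw [eval_shiftedPoly hb' hf, ← dft_eq_zmodDft, show dft N f k = 0 from hFf k hk, mul_zero]
  have hcard : Fintype.card ↥(dInterval N b)ᶜ = N - (2 * b + 1) := by
    rw [Fintype.card_eq_nat_card, Nat.card_coe_set_eq, Set.ncard_compl, Nat.card_zmod,
      ncard_dInterval hb']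
  have hP : shiftedPoly b f = 0 :=
    eq_zero_of_natDegree_lt_card_of_eval_eq_zero _
      (injective_stdAddChar.comp (neg_injective.comp Subtype.val_injective)) hroots
      (by rw [hcard]; have := natDegree_shiftedPoly_le b f; omega)
  ext x
  by_cases hx : x ∈ dInterval N b
  · rw [dInterval_eq_image] at hx
    obtain ⟨i, hi, rfl⟩ := Finset.mem_image.mp hx
    rw [← coeff_shiftedPoly (mem_range.mp hi) f, hP, coeff_zero, Pi.zero_apply]
  · exact hf x hx

theorem finrank_supportedIn (S : Set (ZMod N)) : finrank ℂ (supportedIn N S) = S.ncard := by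
  classical
  have hrank := LinearMap.finrank_range_add_finrank_ker
    (LinearMap.funLeft ℂ ℂ (Subtype.val : ↥Sᶜ → ZMod N))
  rw [LinearMap.range_eq_top.mpr (LinearMap.funLeft_surjective_of_injective _ _ _
    Subtype.val_injective), finrank_top, ← supportedIn_eq_ker_funLeft] at hrank
  rw [finrank_fintype_fun_eq_card, finrank_fintype_fun_eq_card, ZMod.card, Fintype.card_eq_nat_card,
    Nat.card_coe_set_eq] at hrank
  have hcompl := Set.ncard_add_ncard_compl S
  rw [Nat.card_zmod] at hcompl
  omega

theorem dftL_eq_zmodDft : dftL N = (𝓕 : (ZMod N → ℂ) ≃ₗ[ℂ] (ZMod N → ℂ)).toLinearMap :=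
  LinearMap.ext dft_eq_zmodDft

theorem exists_ne_zero_mem_supportedIn_inf_comap_dftL {S T : Set (ZMod N)}
    (h : N < S.ncard + T.ncard) :
    ∃ f ∈ supportedIn N S ⊓ (supportedIn N T).comap (dftL N), f ≠ 0 := by
  have hB : finrank ℂ ((supportedIn N T).comap (dftL N)) = T.ncard := by
    rw [dftL_eq_zmodDft, Submodule.comap_equiv_eq_map_symm, LinearEquiv.finrank_map_eq,
      finrank_supportedIn]
  have hsup : finrank ℂ ↥(supportedIn N S ⊔ (supportedIn N T).comap (dftL N)) ≤ N :=
    (Submodule.finrank_le _).trans_eq (by rw [finrank_fintype_fun_eq_card, ZMod.card])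
  have hsum := Submodule.finrank_sup_add_finrank_inf_eq (supportedIn N S)
    ((supportedIn N T).comap (dftL N))
  refine (Submodule.ne_bot_iff _).mp fun hbot => ?_
  rw [hbot, finrank_bot, finrank_supportedIn, hB] at hsum
  omega

end

theorem statement0_general (N : ℕ) (a : ℤ) (h0 : 0 ≤ a) (h1 : 2 * a + 1 ≤ (N : ℤ)) :
    (∃ f ∈ Ca N a, f ≠ 0) ↔ (N : ℤ) < 4 * a + 2 := by
  lift a to ℕ using h0 with b
  have : NeZero N := ⟨by omega⟩
  have hb : 2 * b + 1 ≤ N := by omega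
  constructor
  · rintro ⟨f, hf, hf_ne⟩
    by_contra hle
    exact hf_ne (eq_zero_of_mem_Ca (by omega) hf)
  · intro hlt
    exact exists_ne_zero_mem_supportedIn_inf_comap_dftL (by rw [ncard_dInterval hb]; omega)

theorem statement0 (N : ℕ) (hN : 0 < N) (a : ℤ) (h0 : 0 ≤ a) (h1 : 2 * a + 1 ≤ (N : ℤ)) :
    (∃ f ∈ Ca N a, f ≠ 0) ↔ (N : ℤ) < 4 * a + 2 :=
  statement0_general N a h0 h1
end

section
/- Let N be a positive integer and a an integer with (N−1)/4 ≤ a ≤ (N−1)/2. Then the complex dimension of C_a equals 4a + 2 − N. -/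
open Complex

open Polynomial Finset Matrix

section Aux

variable (N : ℕ) [NeZero N] (b : ℕ)

/-- The window `[-b,b]` as a finset of `ZMod N`. -/
def Sfin : Finset (ZMod N) := Finset.univ.filter (fun x => x.val ≤ b ∨ N - b ≤ x.val)

/-- The complement of the window. -/
def Kfin : Finset (ZMod N) := Finset.univ.filter (fun x => ¬(x.val ≤ b ∨ N - b ≤ x.val))

lemma mem_Sfin (x : ZMod N) : x ∈ Sfin N b ↔ (x.val ≤ b ∨ N - b ≤ x.val) := by
  simp [Sfin]

lemma mem_Kfin (x : ZMod N) : x ∈ Kfin N b ↔ ¬(x.val ≤ b ∨ N - b ≤ x.val) := by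
  simp [Kfin]

lemma mem_dInterval_iff (hb : 2 * b + 1 ≤ N) (x : ZMod N) :
    x ∈ dInterval N (b : ℤ) ↔ x ∈ Sfin N b := by
  have hbN : b < N := by omega
  rw [mem_Sfin]
  constructor
  · rintro ⟨j, hj, rfl⟩
    rw [abs_le] at hj
    rcases le_or_gt 0 j with h | h
    · left
      lift j to ℕ using h
      have hjb : j ≤ b := by exact_mod_cast hj.2
      rw [Int.cast_natCast, ZMod.val_cast_of_lt (by omega)]
      exact hjb
    · right
      set m : ℕ := (-j).toNat with hm
      have hjm : j = -(m : ℤ) := by omega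
      have hm1 : 1 ≤ m := by omega
      have hmb : m ≤ b := by omega
      have hcast : ((j : ℤ) : ZMod N) = ((N - m : ℕ) : ZMod N) := by
        rw [hjm]
        have : ((N - m : ℕ) : ℤ) = (N : ℤ) - m := by omega
        rw [← Int.cast_natCast (N - m), this]
        push_cast [ZMod.natCast_self]
        ring
      rw [hcast, ZMod.val_cast_of_lt (by omega)]
      omega
  · rintro (h | h)
    · exact ⟨x.val, by rw [Int.abs_natCast]; exact_mod_cast h,
        by rw [Int.cast_natCast, ZMod.natCast_rightInverse x]⟩
    · refine ⟨(x.val : ℤ) - N, ?_, ?_⟩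
      · have := x.val_lt
        rw [abs_le]; omega
      · push_cast [ZMod.natCast_self]
        simp [ZMod.natCast_rightInverse x]

lemma card_Kfin (hb : 2 * b + 1 ≤ N) : (Kfin N b).card = N - (2 * b + 1) := by
  have : Kfin N b = (Finset.Ioo b (N - b)).image (fun m : ℕ => (m : ZMod N)) := by
    ext x
    rw [mem_Kfin]
    simp only [Finset.mem_image, Finset.mem_Ioo]
    constructor
    · intro h
      exact ⟨x.val, by omega, ZMod.natCast_rightInverse x⟩
    · rintro ⟨m, hm, rfl⟩
      rw [ZMod.val_cast_of_lt (by omega)]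
      omega
  rw [this, Finset.card_image_of_injOn, Nat.card_Ioo]
  · omega
  · intro i hi j hj hij
    simp only [Finset.coe_Ioo, Set.mem_Ioo] at hi hj
    simp only at hij
    rw [← ZMod.val_cast_of_lt (n := N) (a := i) (by omega), hij,
      ZMod.val_cast_of_lt (by omega)]

lemma card_Sfin (hb : 2 * b + 1 ≤ N) : (Sfin N b).card = 2 * b + 1 := by
  have h := Finset.card_filter_add_card_filter_not
    (s := (Finset.univ : Finset (ZMod N))) (p := fun x => x.val ≤ b ∨ N - b ≤ x.val)
  rw [Finset.card_univ, ZMod.card] at h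
  have h2 := card_Kfin N b hb
  unfold Kfin at h2
  unfold Sfin
  omega

/-- A primitive `N`-th root of unity. -/
noncomputable def zet (N : ℕ) : ℂ := Complex.exp (-(2 * Real.pi * Complex.I) / N)

lemma zet_prim : IsPrimitiveRoot (zet N) N := by
  have h := Complex.isPrimitiveRoot_exp N (NeZero.ne N)
  have : zet N = (Complex.exp (2 * Real.pi * Complex.I / N))⁻¹ := by
    rw [← Complex.exp_neg, zet]; congr 1; ring
  rw [this]
  exact h.inv

lemma zet_ne_zero : zet N ≠ 0 := Complex.exp_ne_zero _

lemma exp_eq_zet (j m : ℕ) :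
    Complex.exp (-(2 * Real.pi * Complex.I * (j : ℂ) * (m : ℂ)) / (N : ℂ))
      = zet N ^ (j * m) := by
  rw [zet, ← Complex.exp_nat_mul]
  congr 1
  push_cast
  ring

/-- The DFT of a function supported in the window, as a finite sum over the window. -/
lemma dft_eq_sum_Sfin (hb : 2 * b + 1 ≤ N) (f : ZMod N → ℂ)
    (hf : ∀ x ∉ dInterval N (b : ℤ), f x = 0) (k : ZMod N) :
    dft N f k = ∑ x ∈ Sfin N b, zet N ^ (x.val * k.val) * f x := by
  have step1 : dft N f k = ∑ x : ZMod N, zet N ^ (x.val * k.val) * f x := by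
    rw [dft]
    refine Finset.sum_nbij' (fun j : ℕ => (j : ZMod N)) (fun x : ZMod N => x.val)
      (fun j _ => Finset.mem_univ _) (fun x _ => Finset.mem_range.mpr x.val_lt)
      ?_ ?_ ?_
    · intro j hj
      exact ZMod.val_cast_of_lt (Finset.mem_range.mp hj)
    · intro x _
      exact ZMod.natCast_rightInverse x
    · intro j hj
      rw [exp_eq_zet, ZMod.val_cast_of_lt (Finset.mem_range.mp hj)]
  rw [step1]
  refine (Finset.sum_subset (Finset.subset_univ _) ?_).symm
  intro x _ hx
  rw [hf x (fun hmem => hx ((mem_dInterval_iff N b hb x).mp hmem)), mul_zero]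

/-- The DFT submatrix with rows outside the window and columns in the window. -/
noncomputable def Amat : Matrix (Kfin N b) (Sfin N b) ℂ :=
  fun k x => zet N ^ ((x : ZMod N).val * (k : ZMod N).val)

lemma mulVec_restrict (hb : 2 * b + 1 ≤ N) (f : ZMod N → ℂ)
    (hf : ∀ x ∉ dInterval N (b : ℤ), f x = 0) (k : Kfin N b) :
    (Amat N b).mulVec (fun x => f x.1) k = dft N f k.1 := by
  rw [dft_eq_sum_Sfin N b hb f hf]
  simp only [Matrix.mulVec, dotProduct, Amat]
  rw [Finset.univ_eq_attach]
  exact Finset.sum_attach (Sfin N b) (fun x => zet N ^ (x.val * (k.1).val) * f x)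

/-- `Ca` is isomorphic to the kernel of the submatrix map. -/
noncomputable def caEquiv (hb : 2 * b + 1 ≤ N) :
    (Ca N (b : ℤ)) ≃ₗ[ℂ] LinearMap.ker (Amat N b).mulVecLin where
  toFun f := ⟨fun x => f.1 x.1, by
    rw [LinearMap.mem_ker]
    funext k
    obtain ⟨hf1, hf2⟩ := Submodule.mem_inf.mp f.2
    have hk : (k : ZMod N) ∉ dInterval N (b : ℤ) := by
      rw [mem_dInterval_iff N b hb]
      exact (mem_Kfin N b _).mp k.2 ∘ (mem_Sfin N b _).mp
    show (Amat N b).mulVecLin (fun x => f.1 x.1) k = (0 : ℂ)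
    rw [Matrix.mulVecLin_apply, mulVec_restrict N b hb f.1 hf1 k]
    exact Submodule.mem_comap.mp hf2 k.1 hk⟩
  map_add' f g := rfl
  map_smul' r f := rfl
  invFun c := ⟨fun x => if h : x ∈ Sfin N b then c.1 ⟨x, h⟩ else 0, by
    have hsupp : ∀ x ∉ dInterval N (b : ℤ),
        (if h : x ∈ Sfin N b then c.1 ⟨x, h⟩ else 0) = 0 := by
      intro x hx
      rw [dif_neg (fun h => hx ((mem_dInterval_iff N b hb x).mpr h))]
    refine Submodule.mem_inf.mpr ⟨hsupp, Submodule.mem_comap.mpr ?_⟩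
    intro k hk
    have hkK : k ∈ Kfin N b := by
      rw [mem_Kfin]
      exact fun h => hk ((mem_dInterval_iff N b hb k).mpr ((mem_Sfin N b k).mpr h))
    have hfun : (fun x : Sfin N b =>
        (if h : (x : ZMod N) ∈ Sfin N b then c.1 ⟨x, h⟩ else 0)) = c.1 :=
      funext fun x => by rw [dif_pos x.2]
    show dft N (fun x => if h : x ∈ Sfin N b then c.1 ⟨x, h⟩ else 0) k = 0
    rw [← mulVec_restrict N b hb _ hsupp ⟨k, hkK⟩, hfun]
    have := c.2
    rw [LinearMap.mem_ker] at this
    rw [← Matrix.mulVecLin_apply, this, Pi.zero_apply]⟩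
  left_inv f := by
    apply Subtype.ext
    funext x
    by_cases h : x ∈ Sfin N b
    · simp only [dif_pos h]
    · have := Submodule.mem_inf.mp f.2
      simp only [dif_neg h]
      exact (this.1 x (fun hmem => h ((mem_dInterval_iff N b hb x).mp hmem))).symm
  right_inv c := by
    apply Subtype.ext
    funext x
    simp only [dif_pos x.2]

/-- Full row rank: the transpose of the submatrix has trivial kernel. -/
lemma Amat_transpose_injective (hb : 2 * b + 1 ≤ N) (hN : N ≤ 4 * b + 1) :
    Function.Injective (Amat N b)ᵀ.mulVecLin := by
  rw [← LinearMap.ker_eq_bot, LinearMap.ker_eq_bot']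
  intro c hc
  set P : ℂ[X] := ∑ k ∈ (Kfin N b).attach, Polynomial.C (c k) * X ^ ((k : ZMod N).val - (b + 1))
    with hP
  have hkval : ∀ k : Kfin N b, b + 1 ≤ (k : ZMod N).val ∧ (k : ZMod N).val < N - b := by
    intro k
    have := (mem_Kfin N b _).mp k.2
    omega
  have heval : ∀ x : Sfin N b, P.eval (zet N ^ (x : ZMod N).val) = 0 := by
    intro x
    have h1 : zet N ^ ((x : ZMod N).val * (b + 1)) * P.eval (zet N ^ (x : ZMod N).val)
        = (Amat N b)ᵀ.mulVec c x := by
      simp only [hP, Polynomial.eval_finset_sum, Polynomial.eval_mul, Polynomial.eval_C,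
        Polynomial.eval_pow, Polynomial.eval_X, Finset.mul_sum,
        Matrix.mulVec, dotProduct, Matrix.transpose_apply, Amat]
      rw [Finset.univ_eq_attach]
      refine Finset.sum_congr rfl ?_
      intro k _
      have e1 : (b + 1) + ((k : ZMod N).val - (b + 1)) = (k : ZMod N).val := by have := (hkval k).1; omega
      have e2 : zet N ^ ((x : ZMod N).val * (b + 1))
            * zet N ^ ((x : ZMod N).val * ((k : ZMod N).val - (b + 1)))
          = zet N ^ ((x : ZMod N).val * (k : ZMod N).val) := by
        rw [← pow_add, ← Nat.mul_add, e1]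
      rw [← pow_mul]
      calc zet N ^ ((x : ZMod N).val * (b + 1))
            * (c k * zet N ^ ((x : ZMod N).val * ((k : ZMod N).val - (b + 1))))
          = (zet N ^ ((x : ZMod N).val * (b + 1))
            * zet N ^ ((x : ZMod N).val * ((k : ZMod N).val - (b + 1)))) * c k := by ring
        _ = zet N ^ ((x : ZMod N).val * (k : ZMod N).val) * c k := by rw [e2]
    have h2 : (Amat N b)ᵀ.mulVec c x = 0 := by
      rw [← Matrix.mulVecLin_apply, hc, Pi.zero_apply]
    rw [h2] at h1
    exact (mul_eq_zero.mp h1).resolve_left (pow_ne_zero _ (zet_ne_zero N))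
  have hP0 : P = 0 := by
    refine Polynomial.eq_zero_of_natDegree_lt_card_of_eval_eq_zero P
      (f := fun x : Sfin N b => zet N ^ (x : ZMod N).val) ?_ heval ?_
    · intro x y hxy
      have := (zet_prim N).pow_inj (ZMod.val_lt _) (ZMod.val_lt _) hxy
      exact Subtype.ext (ZMod.val_injective N this)
    · have hdeg : P.natDegree ≤ 2 * b := by
        refine Polynomial.natDegree_sum_le_of_forall_le _ _ ?_
        intro k _
        refine le_trans (Polynomial.natDegree_C_mul_le _ _) ?_
        rw [Polynomial.natDegree_X_pow]
        have := hkval k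
        omega
      have hcard : Fintype.card (Sfin N b) = 2 * b + 1 := by
        rw [Fintype.card_coe, card_Sfin N b hb]
      omega
  funext k
  have hcoeff : P.coeff ((k : ZMod N).val - (b + 1)) = c k := by
    rw [hP, Polynomial.finset_sum_coeff]
    rw [Finset.sum_eq_single k]
    · rw [Polynomial.coeff_C_mul, Polynomial.coeff_X_pow, if_pos rfl, mul_one]
    · intro k' _ hk'
      rw [Polynomial.coeff_C_mul, Polynomial.coeff_X_pow, if_neg, mul_zero]
      intro heq
      apply hk'
      have h1 := hkval k
      have h2 := hkval k'
      have : (k' : ZMod N).val = (k : ZMod N).val := by omega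
      exact Subtype.ext (ZMod.val_injective N this)
    · intro h
      exact absurd (Finset.mem_attach _ k) h
  rw [hP0, Polynomial.coeff_zero] at hcoeff
  rw [Pi.zero_apply, ← hcoeff]

end Aux

theorem statement1 (N : ℕ) [NeZero N] (a : ℤ) (h0 : (N : ℤ) - 1 ≤ 4 * a)
    (h1 : 2 * a + 1 ≤ (N : ℤ)) :
    (Module.finrank ℂ ↥(Ca N a) : ℤ) = 4 * a + 2 - N := by
  have ha0 : 0 ≤ a := by omega
  obtain ⟨b, rfl⟩ : ∃ b : ℕ, a = (b : ℤ) := ⟨a.toNat, (Int.toNat_of_nonneg ha0).symm⟩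
  have hb : 2 * b + 1 ≤ N := by exact_mod_cast h1
  have hN : N ≤ 4 * b + 1 := by omega
  have e1 : Module.finrank ℂ ↥(Ca N (b : ℤ))
      = Module.finrank ℂ ↥(LinearMap.ker (Amat N b).mulVecLin) :=
    (caEquiv N b hb).finrank_eq
  have h2 := LinearMap.finrank_range_add_finrank_ker ((Amat N b).mulVecLin)
  have h3 := LinearMap.finrank_range_add_finrank_ker ((Amat N b)ᵀ.mulVecLin)
  have hkerT : LinearMap.ker ((Amat N b)ᵀ.mulVecLin) = ⊥ :=
    LinearMap.ker_eq_bot.mpr (Amat_transpose_injective N b hb hN)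
  rw [hkerT, finrank_bot, Module.finrank_fintype_fun_eq_card, Fintype.card_coe,
    card_Kfin N b hb, Nat.add_zero] at h3
  have hrT : ((Amat N b)ᵀ).rank = N - (2 * b + 1) := h3
  have hrA : ((Amat N b)).rank = N - (2 * b + 1) := by
    rw [← Matrix.rank_transpose, hrT]
  have h2' : Module.finrank ℂ ↥(LinearMap.range (Amat N b).mulVecLin)
      = N - (2 * b + 1) := hrA
  rw [h2', Module.finrank_fintype_fun_eq_card, Fintype.card_coe, card_Sfin N b hb] at h2
  rw [e1]
  omega
end

section
/- Let N be a positive integer and a an integer with (N−2)/4 ≤ a ≤ (N−1)/2 (i.e. 4a + 2 ≥ N). If f : ℤ/Nℤ → ℂ satisfies f(y) = 0 and (F_N f)(y) = 0 for all y in the discrete interval [−a,a], then f = 0. In other words, the pair ([−a,a], [−a,a]) is a Fourier uniqueness pair for ℤ/Nℤ: every function f : ℤ/Nℤ → ℂ is uniquely determined by the values of f on [−a,a] together with the values of F_N f on [−a,a]. -/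
open Complex

lemma aux_main (N : ℕ) (hN : 0 < N) (A : ℕ) (h2 : N ≤ 4 * A + 2) (h1 : 2 * A + 1 ≤ N)
    (f : ZMod N → ℂ) (hf : ∀ y ∈ dInterval N (A : ℤ), f y = 0 ∧ dft N f y = 0) :
    f = 0 := by
  haveI : NeZero N := ⟨hN.ne'⟩
  set ζ : ℂ := Complex.exp (-(2 * Real.pi * Complex.I) / N) with hζdef
  have hζ : IsPrimitiveRoot ζ N := by
    have := (Complex.isPrimitiveRoot_exp N hN.ne').inv
    rw [← Complex.exp_neg] at this
    simpa [hζdef, neg_div] using this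
  have hζne : ζ ≠ 0 := Complex.exp_ne_zero _
  -- membership facts
  have hmem_le : ∀ x : ZMod N, x.val ≤ A → x ∈ dInterval N (A : ℤ) := by
    intro x hx
    refine ⟨(x.val : ℤ), by rw [_root_.abs_of_nonneg (by positivity)]; exact_mod_cast hx, ?_⟩
    push_cast
    simp [ZMod.natCast_val, ZMod.cast_id]
  have hmem_ge : ∀ x : ZMod N, N - A ≤ x.val → x ∈ dInterval N (A : ℤ) := by
    intro x hx
    have hvlt : x.val < N := ZMod.val_lt x
    refine ⟨(x.val : ℤ) - N, ?_, ?_⟩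
    · rw [abs_le]
      constructor <;> omega
    · push_cast
      simp [ZMod.natCast_val, ZMod.cast_id]
  -- support of f
  have hsupp : ∀ j : ℕ, j < N → j ∉ Finset.Ico (A + 1) (N - A) → f (j : ZMod N) = 0 := by
    intro j hj hj2
    simp only [Finset.mem_Ico, not_and, not_lt] at hj2
    rcases le_or_gt j A with h | h
    · exact (hf _ (hmem_le _ (by rwa [ZMod.val_cast_of_lt hj]))).1
    · exact (hf _ (hmem_ge _ (by rw [ZMod.val_cast_of_lt hj]; exact hj2 h))).1
  -- exponential as power of ζ
  have hexp : ∀ j v : ℕ,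
      Complex.exp (-(2 * Real.pi * Complex.I * (j : ℂ) * (v : ℂ)) / (N : ℂ)) = ζ ^ (j * v) := by
    intro j v
    rw [hζdef, ← Complex.exp_nat_mul]
    congr 1
    push_cast
    ring
  set m : ℕ := N - A - (A + 1) with hm
  set P : Polynomial ℂ :=
    ∑ i ∈ Finset.range m, Polynomial.C (f (((A + 1) + i : ℕ) : ZMod N)) * Polynomial.X ^ i
    with hP
  have hdeg : P.natDegree < 2 * A + 1 := by
    have : P.natDegree ≤ 2 * A := by
      apply Polynomial.natDegree_sum_le_of_forall_le
      intro i hi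
      simp only [Finset.mem_range] at hi
      calc (Polynomial.C (f (((A + 1) + i : ℕ) : ZMod N)) * Polynomial.X ^ i).natDegree
          ≤ (Polynomial.X ^ i : Polynomial ℂ).natDegree := Polynomial.natDegree_C_mul_le _ _
        _ = i := Polynomial.natDegree_X_pow i
        _ ≤ 2 * A := by omega
    omega
  -- dft as polynomial evaluation
  have hval : ∀ y : ZMod N,
      dft N f y = ζ ^ ((A + 1) * y.val) * P.eval (ζ ^ y.val) := by
    intro y
    have step1 : dft N f y = ∑ j ∈ Finset.Ico (A + 1) (N - A), ζ ^ (j * y.val) * f (j : ZMod N) := by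
      rw [dft]
      rw [← Finset.sum_subset (s₁ := Finset.Ico (A + 1) (N - A)) (s₂ := Finset.range N)
        (by intro j hj; simp only [Finset.mem_Ico] at hj; simp only [Finset.mem_range]; omega)
        (by intro j hj hj2; rw [hsupp j (Finset.mem_range.mp hj) hj2, mul_zero])]
      exact Finset.sum_congr rfl fun j _ => by rw [hexp]
    rw [step1, Finset.sum_Ico_eq_sum_range]
    rw [hP, Polynomial.eval_finset_sum, Finset.mul_sum]
    rw [hm]
    apply Finset.sum_congr rfl
    intro i hi
    simp only [Polynomial.eval_mul, Polynomial.eval_C, Polynomial.eval_pow, Polynomial.eval_X]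
    rw [← pow_mul, add_mul, pow_add, mul_comm (y.val) i]
    ring
  -- the evaluation points
  have hroot : ∀ k : ℕ, k < 2 * A + 1 →
      P.eval (ζ ^ (((k : ℤ) - A : ZMod N)).val) = 0 := by
    intro k hk
    have hmem : (((k : ℤ) - A : ZMod N)) ∈ dInterval N (A : ℤ) := by
      refine ⟨(k : ℤ) - A, ?_, by push_cast; ring⟩
      rw [abs_le]; omega
    have := (hf _ hmem).2
    rw [hval] at this
    rcases mul_eq_zero.mp this with h | h
    · exact absurd h (pow_ne_zero _ hζne)
    · exact h
  have hinj : Set.InjOn (fun k : ℕ => ζ ^ (((k : ℤ) - A : ZMod N)).val)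
      (Finset.range (2 * A + 1)) := by
    intro k1 hk1 k2 hk2 h
    simp only [Finset.coe_range, Set.mem_Iio] at hk1 hk2
    have h3 := hζ.pow_inj (ZMod.val_lt _) (ZMod.val_lt _) h
    have h4 : (((k1 : ℤ) - A : ZMod N)) = (((k2 : ℤ) - A : ZMod N)) := ZMod.val_injective _ h3
    have h5 : ((k1 : ℤ) : ZMod N) = ((k2 : ℤ) : ZMod N) := by
      have := sub_eq_sub_iff_sub_eq_sub.mp (by push_cast at h4 ⊢; exact h4)
      simpa using h4
    have h6 : (k1 : ZMod N) = (k2 : ZMod N) := by push_cast at h5; exact h5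
    have := congrArg ZMod.val h6
    rwa [ZMod.val_cast_of_lt (by omega), ZMod.val_cast_of_lt (by omega)] at this
  have hPzero : P = 0 := by
    apply Polynomial.eq_zero_of_natDegree_lt_card_of_eval_eq_zero' P
      ((Finset.range (2 * A + 1)).image (fun k : ℕ => ζ ^ (((k : ℤ) - A : ZMod N)).val))
    · intro z hz
      simp only [Finset.mem_image, Finset.mem_range] at hz
      obtain ⟨k, hk, rfl⟩ := hz
      exact hroot k hk
    · rwa [Finset.card_image_of_injOn hinj, Finset.card_range]
  -- coefficients give remaining values
  have hcoeff : ∀ i : ℕ, i < m → f (((A + 1) + i : ℕ) : ZMod N) = 0 := by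
    intro i hi
    have : P.coeff i = f (((A + 1) + i : ℕ) : ZMod N) := by
      rw [hP, Polynomial.finset_sum_coeff]
      simp only [Polynomial.coeff_C_mul, Polynomial.coeff_X_pow, mul_ite, mul_one, mul_zero]
      rw [Finset.sum_ite_eq (Finset.range m) i]
      simp [hi]
    rw [hPzero] at this
    simpa using this.symm
  funext x
  have hvlt : x.val < N := ZMod.val_lt x
  have hx : ((x.val : ℕ) : ZMod N) = x := by simp [ZMod.natCast_val, ZMod.cast_id]
  rcases le_or_gt x.val A with h | h
  · exact (hf _ (hmem_le _ h)).1
  rcases le_or_gt (N - A) x.val with h' | h'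
  · exact (hf _ (hmem_ge _ h')).1
  · have hi : x.val - (A + 1) < m := by omega
    have := hcoeff (x.val - (A + 1)) hi
    rw [show (A + 1) + (x.val - (A + 1)) = x.val by omega] at this
    rw [hx] at this
    simpa using this

theorem statement2 (N : ℕ) (hN : 0 < N) (a : ℤ) (h2 : (N : ℤ) ≤ 4 * a + 2)
    (h1 : 2 * a + 1 ≤ (N : ℤ)) :
    (∀ f : ZMod N → ℂ, (∀ y ∈ dInterval N a, f y = 0 ∧ dft N f y = 0) → f = 0) ∧
    (∀ f g : ZMod N → ℂ,
      (∀ y ∈ dInterval N a, f y = g y ∧ dft N f y = dft N g y) → f = g) := by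
  have ha : 0 ≤ a := by omega
  obtain ⟨A, rfl⟩ : ∃ A : ℕ, a = (A : ℤ) := ⟨a.toNat, (Int.toNat_of_nonneg ha).symm⟩
  have h2' : N ≤ 4 * A + 2 := by omega
  have h1' : 2 * A + 1 ≤ N := by omega
  have part1 : ∀ f : ZMod N → ℂ, (∀ y ∈ dInterval N (A : ℤ), f y = 0 ∧ dft N f y = 0) → f = 0 :=
    fun f hf => aux_main N hN A h2' h1' f hf
  refine ⟨part1, ?_⟩
  intro f g hfg
  have hsub : f - g = 0 := by
    apply part1
    intro y hy
    obtain ⟨hv, hd⟩ := hfg y hy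
    refine ⟨by simp [hv, sub_eq_zero], ?_⟩
    have : dft N (f - g) y = dft N f y - dft N g y := by
      simp [dft, mul_sub, Finset.sum_sub_distrib]
    rw [this, hd, sub_self]
  exact sub_eq_zero.mp hsub
end

section
/- Let N be a positive integer and a an integer with (N−2)/4 ≤ a ≤ (N−1)/2. Suppose f : ℤ/Nℤ → ℂ is nonzero, vanishes on the discrete interval [−a,a], and satisfies J f = λ f for some λ ∈ ℂ. Then the function g : ℤ/Nℤ → ℂ defined by g(x) = (F_N f)(x) for x ∈ [−a,a] and g(x) = 0 otherwise is nonzero and satisfies J g = λ g. Consequently, every eigenvalue of the restriction of J to L²([−a,a]') is an eigenvalue of the restriction of J to L²([−a,a]); every eigenvalue of J (on all of L²(ℤ/Nℤ)) has geometric multiplicity at most 2, and it has multiplicity exactly 2 if and only if it is an eigenvalue of the restriction of J to L²([−a,a]'). -/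
open Complex

/-- `A(x) = cos(π(2x+1)/N) − cos(π(2a+1)/N)`. -/
noncomputable def acoef (N : ℕ) (a : ℤ) (x : ZMod N) : ℝ :=
  Real.cos (Real.pi * (2 * (x.val : ℝ) + 1) / N) - Real.cos (Real.pi * (2 * (a : ℝ) + 1) / N)

/-- `B(x) = −2 cos(π(2a+1)/N) cos(2πx/N)`. -/
noncomputable def bcoef (N : ℕ) (a : ℤ) (x : ZMod N) : ℝ :=
  -2 * Real.cos (Real.pi * (2 * (a : ℝ) + 1) / N) * Real.cos (2 * Real.pi * (x.val : ℝ) / N)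

/-- The operator `J = J₁ − cos(π(2a+1)/N) J₀`:
`(J f)(x) = A(x) f(x+1) + B(x) f(x) + A(x−1) f(x−1)`. -/
noncomputable def Jop (N : ℕ) (a : ℤ) (f : ZMod N → ℂ) : ZMod N → ℂ := fun x =>
  (acoef N a x : ℂ) * f (x + 1) + (bcoef N a x : ℂ) * f x + (acoef N a (x - 1) : ℂ) * f (x - 1)


/-- The operator `J` as a linear map. -/
noncomputable def JopL (N : ℕ) (a : ℤ) : (ZMod N → ℂ) →ₗ[ℂ] (ZMod N → ℂ) where
  toFun := Jop N a
  map_add' f g := by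
    funext x
    simp only [Jop, Pi.add_apply]
    ring
  map_smul' c f := by
    funext x
    simp only [Jop, Pi.smul_apply, smul_eq_mul, RingHom.id_apply]
    ring

/-!
Writing `A` and `B` through the character `𝐞 x = exp (2πi x / N)` and `q = exp (πi / N)`
(with `q² = 𝐞 1`), one checks that `J` acts in the same way on both variables of the Fourier
kernel `𝐞 (-(j * k))`, so `J` commutes with the Fourier transform. The coefficient `A x` vanishes
exactly for `x = a` and `x = -a - 1`, i.e. on the two edges crossing the boundary of `[-a, a]`, so
`J` also commutes with restriction to `[-a, a]`. Hence restricting the transform of an eigenvector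
`f` vanishing on `[-a, a]` gives an eigenvector; it is nonzero by an uncertainty principle:
`f` lives on `N - 2a - 1 ≤ 2a + 1` points, so by a Vandermonde argument its transform cannot vanish
at the `2a + 1` consecutive frequencies of `[-a, a]`.

Inside `[-a, a]` and inside its complement `J` is tridiagonal with nonzero off-diagonal entries,
so an eigenvector supported in either part is determined by its value at one endpoint. Each
eigenspace is the direct sum of its two parts, hence has dimension at most `2`, with equality
exactly when the part on the complement is nonzero (the transfer above then makes the other part
nonzero too).
-/

open Module

lemma add_inv_eq_add_inv_iff {K : Type*} [Field K] {w z : K} (hw : w ≠ 0) (hz : z ≠ 0) :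
    w + w⁻¹ = z + z⁻¹ ↔ w = z ∨ w * z = 1 := by
  have hfac : w + w⁻¹ - (z + z⁻¹) = (w - z) * (1 - (w * z)⁻¹) := by
    field_simp
    ring
  rw [← sub_eq_zero, hfac, mul_eq_zero, sub_eq_zero, sub_eq_zero, eq_comm (a := (1 : K)),
    inv_eq_one]

lemma eq_zero_of_threeTermRecurrence {R : Type*} [Ring R] [NoZeroDivisors R]
    {α β γ u : ℤ → R} {p q : ℤ}
    (hrec : ∀ m, p ≤ m → m < q → α m * u (m + 1) + β m * u m + γ m * u (m - 1) = 0)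
    (hα : ∀ m, p ≤ m → m < q → α m ≠ 0) (hγ : γ p * u (p - 1) = 0) (hp : u p = 0) :
    ∀ m, p ≤ m → m ≤ q → u m = 0 := by
  suffices h : ∀ m, p ≤ m → m ≤ q → γ m * u (m - 1) = 0 ∧ u m = 0 from
    fun m hpm hmq => (h m hpm hmq).2
  refine Int.leInduction (fun _ => ⟨hγ, hp⟩) fun m hpm ih hmq => ?_
  obtain ⟨hγm, hum⟩ := ih (by omega)
  have hstep := hrec m hpm (by omega)
  rw [hγm, hum, mul_zero, add_zero, add_zero] at hstep
  have hum' : u (m + 1) = 0 := (mul_eq_zero.mp hstep).resolve_left (hα m hpm (by omega))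
  rw [add_sub_cancel_right, hum, mul_zero]
  exact ⟨rfl, hum'⟩

lemma Finset.eq_zero_of_forall_sum_mul_pow_eq_zero {ι R : Type*} [CommRing R] [IsDomain R]
    {s : Finset ι} {v z : ι → R} (hz : Set.InjOn z s)
    (h : ∀ i < s.card, ∑ j ∈ s, v j * z j ^ i = 0) : ∀ j ∈ s, v j = 0 := by
  let e : Fin s.card ≃ s := s.equivFin.symm
  have hv : (fun k => v (e k)) = 0 := by
    refine Matrix.eq_zero_of_forall_pow_sum_mul_pow_eq_zero (f := fun k => z (e k))
      (fun k l hkl => e.injective (Subtype.ext (hz (e k).2 (e l).2 hkl))) fun i => ?_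
    rw [← h i i.2, ← Finset.sum_coe_sort s]
    exact e.sum_comp fun j : s => v j * z j ^ (i : ℕ)
  intro j hj
  simpa using congrFun hv (e.symm ⟨j, hj⟩)

lemma finrank_le_one_of_eq_zero_of_apply_eq_zero {ι K : Type*} [Field K]
    (W : Submodule K (ι → K)) (x₀ : ι) (h : ∀ f ∈ W, f x₀ = 0 → f = 0) : finrank K W ≤ 1 := by
  have hinj : Function.Injective ((LinearMap.proj x₀ : (ι → K) →ₗ[K] K) ∘ₗ W.subtype) := by
    rw [← LinearMap.ker_eq_bot, Submodule.eq_bot_iff]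
    rintro ⟨f, hf⟩ hf0
    exact Subtype.ext (h f hf hf0)
  simpa using LinearMap.finrank_le_finrank_of_injective hinj

local notation "𝐞" => ZMod.stdAddChar

section Character

variable {N : ℕ} [NeZero N]

lemma stdAddChar_eq_exp_val (x : ZMod N) : 𝐞 x = exp (2 * Real.pi * I * x.val / N) := by
  rw [ZMod.stdAddChar_apply, ZMod.toCircle_apply]

lemma dft_eq_zmod_dft (f : ZMod N → ℂ) : dft N f = ZMod.dft f := by
  funext k
  rw [dft, ZMod.dft_apply]
  refine Finset.sum_nbij' (fun j => (j : ZMod N)) ZMod.val (fun _ _ => Finset.mem_univ _)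
    (fun x _ => Finset.mem_range.mpr x.val_lt)
    (fun j hj => ZMod.val_cast_of_lt (Finset.mem_range.mp hj))
    (fun x _ => ZMod.natCast_zmod_val x) fun j _ => ?_
  have hjk : -((j : ZMod N) * k) = ((-((j : ℤ) * k.val) : ℤ) : ZMod N) := by
    push_cast
    rw [ZMod.natCast_zmod_val]
  rw [smul_eq_mul, hjk, ZMod.stdAddChar_coe]
  congr 2
  push_cast
  ring

noncomputable def halfRoot (N : ℕ) : ℂ := exp (Real.pi * I / N)

omit [NeZero N] in
lemma halfRoot_ne_zero : halfRoot N ≠ 0 := exp_ne_zero _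

lemma halfRoot_sq : halfRoot N ^ 2 = 𝐞 (1 : ZMod N) := by
  rw [halfRoot, ← exp_nat_mul, ← Int.cast_one, ZMod.stdAddChar_coe]
  congr 1
  push_cast
  ring

lemma ofReal_cos_eq (θ : ℝ) : (Real.cos θ : ℂ) = (exp (θ * I) + (exp (θ * I))⁻¹) / 2 := by
  rw [ofReal_cos, cos, ← exp_neg, neg_mul]

lemma cos_pi_two_mul_add_one_div (r : ℝ) (x : ZMod N) (hx : exp (2 * Real.pi * I * r / N) = 𝐞 x) :
    (Real.cos (Real.pi * (2 * r + 1) / N) : ℂ)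
      = (halfRoot N * 𝐞 x + (halfRoot N * 𝐞 x)⁻¹) / 2 := by
  rw [ofReal_cos_eq, ← hx, halfRoot, ← exp_add]
  push_cast
  ring_nf

lemma acoef_eq (a : ℤ) (x : ZMod N) :
    (acoef N a x : ℂ) = (halfRoot N * 𝐞 x + (halfRoot N * 𝐞 x)⁻¹) / 2
      - (Real.cos (Real.pi * (2 * a + 1) / N) : ℂ) := by
  rw [acoef, ofReal_sub, cos_pi_two_mul_add_one_div _ x (stdAddChar_eq_exp_val x).symm]

lemma acoef_sub_one_eq (a : ℤ) (x : ZMod N) :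
    (acoef N a (x - 1) : ℂ) = ((halfRoot N)⁻¹ * 𝐞 x + ((halfRoot N)⁻¹ * 𝐞 x)⁻¹) / 2
      - (Real.cos (Real.pi * (2 * a + 1) / N) : ℂ) := by
  have hq : halfRoot N * 𝐞 (x - 1) = (halfRoot N)⁻¹ * 𝐞 x := by
    rw [AddChar.map_sub_eq_div, ← halfRoot_sq]
    field_simp [halfRoot_ne_zero]
  rw [acoef_eq, hq]

lemma bcoef_eq (a : ℤ) (x : ZMod N) :
    (bcoef N a x : ℂ) = -(Real.cos (Real.pi * (2 * a + 1) / N) : ℂ) * (𝐞 x + (𝐞 x)⁻¹) := by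
  rw [bcoef, ofReal_mul, ofReal_cos_eq (2 * Real.pi * x.val / N), stdAddChar_eq_exp_val]
  push_cast
  ring_nf

lemma jop_fourierKernel_symm (a : ℤ) (j k : ZMod N) :
    𝐞 (-((j - 1) * k)) * acoef N a (j - 1) + 𝐞 (-(j * k)) * bcoef N a j
        + 𝐞 (-((j + 1) * k)) * acoef N a j
      = acoef N a k * 𝐞 (-(j * (k + 1))) + bcoef N a k * 𝐞 (-(j * k))
        + acoef N a (k - 1) * 𝐞 (-(j * (k - 1))) := by
  have e1 : -((j - 1) * k) = -(j * k) + k := by ring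
  have e2 : -((j + 1) * k) = -(j * k) + -k := by ring
  have e3 : -(j * (k + 1)) = -(j * k) + -j := by ring
  have e4 : -(j * (k - 1)) = -(j * k) + j := by ring
  rw [e1, e2, e3, e4]
  simp only [AddChar.map_add_eq_mul, AddChar.map_neg_eq_inv]
  rw [acoef_sub_one_eq, acoef_sub_one_eq, acoef_eq, acoef_eq, bcoef_eq, bcoef_eq]
  simp only [mul_inv, inv_inv]
  ring

lemma dft_jop_comm (a : ℤ) (f : ZMod N → ℂ) : ZMod.dft (Jop N a f) = Jop N a (ZMod.dft f) := by
  funext k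
  calc ZMod.dft (Jop N a f) k
      = ∑ j, (𝐞 (-((j - 1) * k)) * acoef N a (j - 1) + 𝐞 (-(j * k)) * bcoef N a j
          + 𝐞 (-((j + 1) * k)) * acoef N a j) * f j := by
        simp only [ZMod.dft_apply, Jop, smul_eq_mul, mul_add, add_mul, Finset.sum_add_distrib]
        congr 1
        congr 1
        · exact Fintype.sum_equiv (Equiv.addRight 1) _ _ fun j => by
            rw [Equiv.coe_addRight, add_sub_cancel_right, mul_assoc]
        · exact Finset.sum_congr rfl fun j _ => by ring
        · exact Fintype.sum_equiv (Equiv.subRight 1) _ _ fun j => by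
            rw [Equiv.subRight_apply, mul_assoc]
            congr 2
            ring
    _ = ∑ j, (acoef N a k * 𝐞 (-(j * (k + 1))) + bcoef N a k * 𝐞 (-(j * k))
          + acoef N a (k - 1) * 𝐞 (-(j * (k - 1)))) * f j := by
        simp only [jop_fourierKernel_symm]
    _ = Jop N a (ZMod.dft f) k := by
        simp only [Jop, ZMod.dft_apply, smul_eq_mul, Finset.mul_sum, add_mul, Finset.sum_add_distrib]
        congr 1
        congr 1
        all_goals exact Finset.sum_congr rfl fun j _ => by ring

lemma stdAddChar_ne_zero (x : ZMod N) : 𝐞 x ≠ 0 := by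
  rw [stdAddChar_eq_exp_val]
  exact exp_ne_zero _

lemma acoef_eq_zero_iff (a : ℤ) (x : ZMod N) : acoef N a x = 0 ↔ x = a ∨ x = -a - 1 := by
  have hw : halfRoot N * 𝐞 x ≠ 0 := mul_ne_zero halfRoot_ne_zero (stdAddChar_ne_zero x)
  have hz : halfRoot N * 𝐞 (a : ZMod N) ≠ 0 :=
    mul_ne_zero halfRoot_ne_zero (stdAddChar_ne_zero _)
  rw [← ofReal_eq_zero, acoef_eq, cos_pi_two_mul_add_one_div _ _ (ZMod.stdAddChar_coe a).symm,
    ← sub_div, div_eq_zero_iff, sub_eq_zero, add_inv_eq_add_inv_iff hw hz]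
  simp only [two_ne_zero, or_false]
  have hprod : halfRoot N * 𝐞 x * (halfRoot N * 𝐞 (a : ZMod N)) = 𝐞 (x + (a : ZMod N) + 1) := by
    rw [AddChar.map_add_eq_mul, AddChar.map_add_eq_mul, ← halfRoot_sq]
    ring
  rw [mul_right_inj' halfRoot_ne_zero, ZMod.injective_stdAddChar.eq_iff, hprod,
    ← AddChar.map_zero_eq_one (ZMod.stdAddChar (N := N)), ZMod.injective_stdAddChar.eq_iff]
  constructor <;> rintro (h | h) <;> [left; right; left; right] <;> linear_combination h

end Character

section Interval

variable {N : ℕ} {a : ℤ}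

lemma intCast_ne_intCast_of_lt {m n : ℤ} (h : m < n) (h' : n < m + N) :
    (m : ZMod N) ≠ n := by
  rw [Ne, ZMod.intCast_eq_intCast_iff_dvd_sub]
  intro hdvd
  have := Int.eq_zero_of_abs_lt_dvd hdvd (by rw [abs_lt]; omega)
  omega

lemma mem_dInterval_add_one_iff_of_ne {x : ZMod N} (ha : x ≠ a) (ha' : x ≠ -a - 1) :
    x + 1 ∈ dInterval N a ↔ x ∈ dInterval N a := by
  constructor
  · rintro ⟨j, hj, hx⟩
    have hja : j ≠ -a := by
      rintro rfl
      exact ha' (by rw [eq_sub_iff_add_eq, ← hx]; push_cast; rfl)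
    exact ⟨j - 1, by rw [abs_le] at hj ⊢; omega, by rw [Int.cast_sub, hx]; simp⟩
  · rintro ⟨j, hj, rfl⟩
    have hja : j ≠ a := by
      rintro rfl
      exact ha rfl
    exact ⟨j + 1, by rw [abs_le] at hj ⊢; omega, by push_cast; rfl⟩

lemma exists_intCast_eq_of_not_mem_dInterval [NeZero N] {x : ZMod N} (hx : x ∉ dInterval N a) :
    ∃ m : ℤ, a < m ∧ m < N - a ∧ (m : ZMod N) = x := by
  have hlt : (x.val : ℤ) < N := by exact_mod_cast x.val_lt
  refine ⟨x.val, ?_, ?_, by simp⟩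
  · by_contra! h
    exact hx ⟨x.val, by rw [abs_le]; omega, by simp⟩
  · by_contra! h
    exact hx ⟨x.val - N, by rw [abs_le]; omega, by simp⟩

end Interval

section Operator

variable {N : ℕ} [NeZero N] {a : ℤ}

lemma mem_dInterval_add_one_iff_of_acoef_ne_zero {x : ZMod N} (h : acoef N a x ≠ 0) :
    x + 1 ∈ dInterval N a ↔ x ∈ dInterval N a := by
  rw [Ne, acoef_eq_zero_iff, not_or] at h
  exact mem_dInterval_add_one_iff_of_ne h.1 h.2

lemma jop_indicator_dInterval (f : ZMod N → ℂ) :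
    Jop N a ((dInterval N a).indicator f) = (dInterval N a).indicator (Jop N a f) := by
  classical
  funext x
  have hfwd := mem_dInterval_add_one_iff_of_acoef_ne_zero (a := a) (x := x)
  have hbwd := mem_dInterval_add_one_iff_of_acoef_ne_zero (a := a) (x := x - 1)
  rw [sub_add_cancel] at hbwd
  simp only [Jop, Set.indicator_apply]
  split_ifs <;> simp_all

end Operator

section Uniqueness

variable {N : ℕ} [NeZero N] {a : ℤ} {f : ZMod N → ℂ} {lam : ℂ}

omit [NeZero N] in
lemma jop_eigenvector_eq_zero_on_Icc (heig : Jop N a f = lam • f) {p q : ℤ}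
    (hA : ∀ m : ℤ, p ≤ m → m < q → acoef N a m ≠ 0)
    (hstart : (acoef N a ((p - 1 : ℤ) : ZMod N) : ℂ) * f ((p - 1 : ℤ) : ZMod N) = 0)
    (hp : f p = 0) : ∀ m : ℤ, p ≤ m → m ≤ q → f m = 0 := by
  refine eq_zero_of_threeTermRecurrence (α := fun m => (acoef N a m : ℂ))
    (β := fun m => bcoef N a m - lam) (γ := fun m => acoef N a ((m - 1 : ℤ) : ZMod N))
    (fun m _ _ => ?_) (fun m hpm hmq => ofReal_ne_zero.mpr (hA m hpm hmq)) hstart hp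
  have h := congrFun heig m
  simp only [Jop, Pi.smul_apply, smul_eq_mul] at h
  push_cast
  linear_combination h

lemma jop_eigenvector_eq_zero_of_supportedIn_dInterval (h1 : 2 * a + 1 ≤ N)
    (heig : Jop N a f = lam • f) (hf : ∀ x ∉ dInterval N a, f x = 0) (h0 : f (-a : ℤ) = 0) :
    f = 0 := by
  have hA : ∀ m : ℤ, -a ≤ m → m < a → acoef N a m ≠ 0 := by
    intro m hm hm'
    rw [Ne, acoef_eq_zero_iff, not_or]
    refine ⟨intCast_ne_intCast_of_lt hm' (by omega), ?_⟩
    have := intCast_ne_intCast_of_lt (N := N) (m := -a - 1) (n := m) (by omega) (by omega)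
    push_cast at this
    exact this.symm
  have hstart : acoef N a ((-a - 1 : ℤ) : ZMod N) = 0 := by
    rw [acoef_eq_zero_iff]
    right
    push_cast
    rfl
  funext x
  by_cases hx : x ∈ dInterval N a
  · obtain ⟨m, hm, rfl⟩ := hx
    rw [abs_le] at hm
    exact jop_eigenvector_eq_zero_on_Icc heig hA (by rw [hstart, ofReal_zero, zero_mul]) h0 m
      hm.1 hm.2
  · exact hf x hx

lemma jop_eigenvector_eq_zero_of_supportedIn_compl (ha : 0 ≤ a)
    (heig : Jop N a f = lam • f) (hf : ∀ x ∈ dInterval N a, f x = 0) (h0 : f (a + 1 : ℤ) = 0) :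
    f = 0 := by
  have hA : ∀ m : ℤ, a + 1 ≤ m → m < N - a - 1 → acoef N a m ≠ 0 := by
    intro m hm hm'
    rw [Ne, acoef_eq_zero_iff, not_or]
    refine ⟨(intCast_ne_intCast_of_lt (by omega) (by omega)).symm, ?_⟩
    have := intCast_ne_intCast_of_lt (N := N) (m := m) (n := N - a - 1) hm' (by omega)
    push_cast at this
    simpa using this
  have hstart : acoef N a ((a + 1 - 1 : ℤ) : ZMod N) = 0 := by
    rw [acoef_eq_zero_iff, add_sub_cancel_right]
    exact Or.inl rfl
  funext x
  by_cases hx : x ∈ dInterval N a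
  · exact hf x hx
  · obtain ⟨m, hm, hm', rfl⟩ := exists_intCast_eq_of_not_mem_dInterval hx
    exact jop_eigenvector_eq_zero_on_Icc heig hA (by rw [hstart, ofReal_zero, zero_mul]) h0 m
      (by omega) (by omega)

end Uniqueness

section Uncertainty

variable {N : ℕ} [NeZero N]

lemma eq_zero_of_dft_eq_zero_consecutive {f : ZMod N → ℂ} (s : Finset (ZMod N))
    (hf : ∀ x ∉ s, f x = 0) (t : ZMod N) (h : ∀ i < s.card, ZMod.dft f (t + i) = 0) : f = 0 := by
  have hsum : ∀ i : ℕ, ZMod.dft f (t + i) = ∑ j ∈ s, 𝐞 (-(j * t)) * f j * 𝐞 (-j) ^ i := by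
    intro i
    rw [ZMod.dft_apply, ← Finset.sum_subset (Finset.subset_univ s) fun x _ hx => by
      rw [hf x hx, smul_zero]]
    refine Finset.sum_congr rfl fun j _ => ?_
    rw [show -(j * (t + i)) = -(j * t) + i • -j by rw [nsmul_eq_mul]; ring,
      AddChar.map_add_eq_mul, AddChar.map_nsmul_eq_pow, smul_eq_mul]
    ring
  have hv := Finset.eq_zero_of_forall_sum_mul_pow_eq_zero
    (fun x _ y _ hxy => neg_injective (ZMod.injective_stdAddChar hxy))
    fun i hi => (hsum i).symm.trans (h i hi)
  funext x
  by_cases hx : x ∈ s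
  · exact (mul_eq_zero.mp (hv x hx)).resolve_left (stdAddChar_ne_zero _)
  · exact hf x hx

lemma eq_zero_of_dft_eq_zero_on_dInterval {a : ℤ} (h2 : (N : ℤ) ≤ 4 * a + 2) {f : ZMod N → ℂ}
    (hf : ∀ x ∈ dInterval N a, f x = 0) (hFf : ∀ x ∈ dInterval N a, ZMod.dft f x = 0) :
    f = 0 := by
  classical
  let s := (dInterval N a)ᶜ.toFinset
  have hcard : (s.card : ℤ) ≤ 2 * a + 1 := by
    have hsub : s ⊆ (Finset.Ioo a (N - a)).image (fun m : ℤ => (m : ZMod N)) := by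
      intro x hx
      obtain ⟨m, hm, hm', rfl⟩ :=
        exists_intCast_eq_of_not_mem_dInterval (Set.mem_toFinset.mp hx)
      exact Finset.mem_image.mpr ⟨m, Finset.mem_Ioo.mpr ⟨hm, hm'⟩, rfl⟩
    have := (Finset.card_le_card hsub).trans Finset.card_image_le
    rw [Int.card_Ioo] at this
    omega
  refine eq_zero_of_dft_eq_zero_consecutive s (fun x hx => hf x (by simpa [s] using hx))
    (-a : ℤ) fun i hi => hFf _ ⟨-a + i, by rw [abs_le]; omega, by push_cast; rfl⟩

end Uncertainty

section Eigenspaces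

variable {N : ℕ} [NeZero N]

lemma finrank_eigenspace_eq_add_of_indicator_comm (S : Set (ZMod N)) (T : End ℂ (ZMod N → ℂ))
    (hT : ∀ f, T (S.indicator f) = S.indicator (T f)) (μ : ℂ) :
    finrank ℂ (End.eigenspace T μ)
      = finrank ℂ ↥(End.eigenspace T μ ⊓ supportedIn N S)
        + finrank ℂ ↥(End.eigenspace T μ ⊓ supportedIn N Sᶜ) := by
  set E := End.eigenspace T μ
  have hsup : (E ⊓ supportedIn N S) ⊔ (E ⊓ supportedIn N Sᶜ) = E := by
    refine le_antisymm (sup_le inf_le_left inf_le_left) fun f hf => ?_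
    have hf' : S.indicator f ∈ E := by
      rw [End.mem_eigenspace_iff] at hf ⊢
      rw [hT, hf]
      exact Set.indicator_const_smul S μ f
    refine Submodule.mem_sup.mpr ⟨S.indicator f, ⟨hf', fun x hx => Set.indicator_of_notMem hx f⟩,
      f - S.indicator f, ⟨sub_mem hf hf', fun x hx => ?_⟩, add_sub_cancel _ _⟩
    rw [Set.notMem_compl_iff] at hx
    rw [Pi.sub_apply, Set.indicator_of_mem hx, sub_self]
  have hinf : (E ⊓ supportedIn N S) ⊓ (E ⊓ supportedIn N Sᶜ) = ⊥ := by
    rw [Submodule.eq_bot_iff]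
    rintro f ⟨⟨_, hS⟩, ⟨_, hSc⟩⟩
    funext x
    by_cases hx : x ∈ S
    · exact hSc x (Set.notMem_compl_iff.mpr hx)
    · exact hS x hx
  rw [← Submodule.finrank_sup_add_finrank_inf_eq, hsup, hinf, finrank_bot, add_zero]

omit [NeZero N] in
lemma eigenspace_inf_supportedIn_compl_ne_bot_iff (S : Set (ZMod N)) (T : End ℂ (ZMod N → ℂ))
    {μ : ℂ} :
    End.eigenspace T μ ⊓ supportedIn N Sᶜ ≠ ⊥ ↔
      ∃ f : ZMod N → ℂ, f ≠ 0 ∧ (∀ y ∈ S, f y = 0) ∧ T f = μ • f := by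
  refine (Submodule.ne_bot_iff _).trans (exists_congr fun f => ⟨?_, ?_⟩)
  · rintro ⟨⟨hE, hS⟩, hf0⟩
    exact ⟨hf0, fun y hy => hS y (Set.notMem_compl_iff.mpr hy), End.mem_eigenspace_iff.mp hE⟩
  · rintro ⟨hf0, hf, heig⟩
    exact ⟨⟨End.mem_eigenspace_iff.mpr heig, fun y hy => hf y (Set.notMem_compl_iff.mp hy)⟩, hf0⟩

end Eigenspaces

section Main

variable {N : ℕ} [NeZero N] {a : ℤ} {f : ZMod N → ℂ} {lam : ℂ}

lemma indicator_dft_ne_zero (h2 : (N : ℤ) ≤ 4 * a + 2) (hf0 : f ≠ 0)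
    (hf : ∀ y ∈ dInterval N a, f y = 0) : (dInterval N a).indicator (dft N f) ≠ 0 := by
  refine fun hg => hf0 (eq_zero_of_dft_eq_zero_on_dInterval h2 hf fun x hx => ?_)
  rw [← dft_eq_zmod_dft, ← Set.indicator_of_mem hx (dft N f)]
  exact congrFun hg x

lemma jopL_indicator_dft_eq_smul (heig : JopL N a f = lam • f) :
    JopL N a ((dInterval N a).indicator (dft N f)) = lam • (dInterval N a).indicator (dft N f) := by
  change Jop N a _ = _
  rw [jop_indicator_dInterval, dft_eq_zmod_dft, ← dft_jop_comm,
    show Jop N a f = lam • f from heig, map_smul]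
  exact Set.indicator_const_smul _ lam _

lemma finrank_eigenspace_jopL (h2 : (N : ℤ) ≤ 4 * a + 2) (h1 : 2 * a + 1 ≤ (N : ℤ)) (lam : ℂ) :
    finrank ℂ (End.eigenspace (JopL N a) lam) ≤ 2 ∧
      (finrank ℂ (End.eigenspace (JopL N a) lam) = 2 ↔
        ∃ f : ZMod N → ℂ, f ≠ 0 ∧ (∀ y ∈ dInterval N a, f y = 0) ∧ JopL N a f = lam • f) := by
  rw [finrank_eigenspace_eq_add_of_indicator_comm _ _ jop_indicator_dInterval,
    ← eigenspace_inf_supportedIn_compl_ne_bot_iff]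
  have hin : finrank ℂ ↥(End.eigenspace (JopL N a) lam ⊓ supportedIn N (dInterval N a)) ≤ 1 :=
    finrank_le_one_of_eq_zero_of_apply_eq_zero _ ((-a : ℤ) : ZMod N) fun f ⟨hE, hS⟩ h0 =>
      jop_eigenvector_eq_zero_of_supportedIn_dInterval h1 (End.mem_eigenspace_iff.mp hE) hS h0
  have hout : finrank ℂ ↥(End.eigenspace (JopL N a) lam ⊓ supportedIn N (dInterval N a)ᶜ) ≤ 1 :=
    finrank_le_one_of_eq_zero_of_apply_eq_zero _ ((a + 1 : ℤ) : ZMod N) fun f ⟨hE, hS⟩ h0 =>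
      jop_eigenvector_eq_zero_of_supportedIn_compl (by omega) (End.mem_eigenspace_iff.mp hE)
        (fun x hx => hS x (Set.notMem_compl_iff.mpr hx)) h0
  have htransfer : End.eigenspace (JopL N a) lam ⊓ supportedIn N (dInterval N a)ᶜ ≠ ⊥ →
      End.eigenspace (JopL N a) lam ⊓ supportedIn N (dInterval N a) ≠ ⊥ := by
    rw [eigenspace_inf_supportedIn_compl_ne_bot_iff, Submodule.ne_bot_iff]
    rintro ⟨f, hf0, hf, heig⟩
    exact ⟨_, ⟨End.mem_eigenspace_iff.mpr (jopL_indicator_dft_eq_smul heig),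
      fun y hy => Set.indicator_of_notMem hy _⟩, indicator_dft_ne_zero h2 hf0 hf⟩
  rw [← Submodule.one_le_finrank_iff, ← Submodule.one_le_finrank_iff] at htransfer
  rw [← Submodule.one_le_finrank_iff]
  omega

end Main

theorem statement7_general (N : ℕ) (a : ℤ) (h2 : (N : ℤ) ≤ 4 * a + 2)
    (h1 : 2 * a + 1 ≤ (N : ℤ)) :
    (∀ (f : ZMod N → ℂ) (lam : ℂ), f ≠ 0 → (∀ y ∈ dInterval N a, f y = 0) →
      JopL N a f = lam • f →
        (dInterval N a).indicator (dft N f) ≠ 0 ∧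
        JopL N a ((dInterval N a).indicator (dft N f))
          = lam • (dInterval N a).indicator (dft N f)) ∧
    (∀ lam : ℂ,
      (∃ f : ZMod N → ℂ, f ≠ 0 ∧ (∀ y ∈ dInterval N a, f y = 0) ∧ JopL N a f = lam • f) →
      (∃ g : ZMod N → ℂ, g ≠ 0 ∧ (∀ y ∉ dInterval N a, g y = 0) ∧ JopL N a g = lam • g)) ∧
    (∀ lam : ℂ,
      Module.finrank ℂ ↥(Module.End.eigenspace (JopL N a) lam) ≤ 2 ∧
      (Module.finrank ℂ ↥(Module.End.eigenspace (JopL N a) lam) = 2 ↔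
        ∃ f : ZMod N → ℂ, f ≠ 0 ∧ (∀ y ∈ dInterval N a, f y = 0) ∧
          JopL N a f = lam • f)) := by
  have : NeZero N := ⟨by omega⟩
  refine ⟨fun f lam hf0 hf heig =>
      ⟨indicator_dft_ne_zero h2 hf0 hf, jopL_indicator_dft_eq_smul heig⟩, ?_,
    finrank_eigenspace_jopL h2 h1⟩
  rintro lam ⟨f, hf0, hf, heig⟩
  exact ⟨_, indicator_dft_ne_zero h2 hf0 hf, fun y hy => Set.indicator_of_notMem hy _,
    jopL_indicator_dft_eq_smul heig⟩

theorem statement7 (N : ℕ) (hN : 0 < N) (a : ℤ) (h2 : (N : ℤ) ≤ 4 * a + 2)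
    (h1 : 2 * a + 1 ≤ (N : ℤ)) :
    (∀ (f : ZMod N → ℂ) (lam : ℂ), f ≠ 0 → (∀ y ∈ dInterval N a, f y = 0) →
      JopL N a f = lam • f →
        (dInterval N a).indicator (dft N f) ≠ 0 ∧
        JopL N a ((dInterval N a).indicator (dft N f))
          = lam • (dInterval N a).indicator (dft N f)) ∧
    (∀ lam : ℂ,
      (∃ f : ZMod N → ℂ, f ≠ 0 ∧ (∀ y ∈ dInterval N a, f y = 0) ∧ JopL N a f = lam • f) →
      (∃ g : ZMod N → ℂ, g ≠ 0 ∧ (∀ y ∉ dInterval N a, g y = 0) ∧ JopL N a g = lam • g)) ∧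
    (∀ lam : ℂ,
      Module.finrank ℂ ↥(Module.End.eigenspace (JopL N a) lam) ≤ 2 ∧
      (Module.finrank ℂ ↥(Module.End.eigenspace (JopL N a) lam) = 2 ↔
        ∃ f : ZMod N → ℂ, f ≠ 0 ∧ (∀ y ∈ dInterval N a, f y = 0) ∧
          JopL N a f = lam • f)) :=
  statement7_general N a h2 h1
end

section
/- Let N and a be integers with a ≤ (N−1)/2 and r := 4a + 2 − N ≥ 1, and let ξ = exp(2πi/N). Define ψ_a : ℤ/Nℤ → ℂ as the function induced by the N-periodic function of the integer x given by ψ_a(x) = exp(iπ(r−1)x/N) · ∏_{k=1}^{N−2a−1} sin(π(a+k−x)/N); this function vanishes outside the discrete interval [−a,a]. Then the r functions x ↦ ξ^{−jx} ψ_a(x), for 0 ≤ j ≤ r−1, lie in C_a and form a basis of C_a. -/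
open Complex

/-- The primitive `N`-th root of unity `ξ = exp(2πi/N)`. -/
noncomputable def zeta (N : ℕ) : ℂ := Complex.exp (2 * Real.pi * Complex.I / (N : ℂ))

/-- The function `ψ_a(x) = exp(iπ(r−1)x/N) ∏_{k=1}^{N−2a−1} sin(π(a+k−x)/N)`, with
`r = 4a+2−N`, as an `N`-periodic function of the integer `x`. -/
noncomputable def psiInt (N : ℕ) (a : ℤ) (x : ℤ) : ℂ :=
  Complex.exp (Complex.I * ((Real.pi * ((4 * a + 1 - (N : ℤ) : ℤ) : ℝ) * (x : ℝ) / N : ℝ) : ℂ)) *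
    ∏ k ∈ Finset.range ((N : ℤ) - 2 * a - 1).toNat,
      ((Real.sin (Real.pi * ((a : ℝ) + (k + 1) - (x : ℝ)) / N) : ℝ) : ℂ)

/-- `ψ_a` as a function on `ZMod N`. -/
noncomputable def psiZ (N : ℕ) (a : ℤ) : ZMod N → ℂ := fun x => psiInt N a (x.val : ℤ)

/-- The family `x ↦ ξ^{−jx} ψ_a(x)`. -/
noncomputable def basisFam (N : ℕ) (a : ℤ) (j : ℕ) : ZMod N → ℂ := fun x =>
  zeta N ^ (-(j : ℤ) * (x.val : ℤ)) * psiZ N a x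

/-!
Write `ζ = ξ = exp(2πi/N)`. Fourier inversion shows that the functions whose transform vanishes
outside `[-a, a]` are exactly `x ↦ ζ^{a x} Q(ζ^{-x})` with `deg Q ≤ 2a`. Such a function vanishes
outside `[-a, a]` iff `Q` vanishes at the `N - 2a - 1` points `ζ^{-v}`, `a < v < N - a`, i.e. iff
`Q = S P` with `P = ∏ (X - ζ^{-v})` and `deg S < r`. Expanding the sines as exponentials gives
`ψ_a(x) = c ζ^{a x} P(ζ^{-x})` with `c ≠ 0`, so `ζ^{-jx} ψ_a` is the function attached to `S = X^j`.
The correspondence `S ↦ c ζ^{a x} (S P)(ζ^{-x})` is injective for `deg S < r`, because `S P` then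
has degree `< N` and is determined by its values at the `N` distinct points `ζ^{-x}`.
-/

open Polynomial

section RootsOfUnity

variable {N : ℕ}

/-- `exp(πi/N)`, a square root of `ζ`: the sines in `ψ_a` are differences of its powers. -/
noncomputable def sqrtZeta (N : ℕ) : ℂ := Complex.exp (Real.pi * Complex.I / N)

lemma sqrtZeta_zpow (n : ℤ) : sqrtZeta N ^ n = Complex.exp (n * (Real.pi * Complex.I / N)) :=
  (Complex.exp_int_mul _ n).symm

lemma zeta_zpow (n : ℤ) : zeta N ^ n = Complex.exp (n * (2 * Real.pi * Complex.I / N)) :=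
  (Complex.exp_int_mul _ n).symm

lemma zeta_ne_zero : zeta N ≠ 0 := Complex.exp_ne_zero _

lemma sqrtZeta_ne_zero : sqrtZeta N ≠ 0 := Complex.exp_ne_zero _

lemma zeta_zpow_eq_sqrtZeta_zpow (n : ℤ) : zeta N ^ n = sqrtZeta N ^ (2 * n) := by
  rw [zeta_zpow, sqrtZeta_zpow]
  push_cast
  ring_nf

lemma zeta_isPrimitiveRoot [NeZero N] : IsPrimitiveRoot (zeta N) N :=
  Complex.isPrimitiveRoot_exp N (NeZero.ne N)

lemma zeta_zpow_eq_zeta_zpow_iff [NeZero N] {u v : ℤ} :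
    zeta N ^ u = zeta N ^ v ↔ (N : ℤ) ∣ u - v := by
  rw [← zeta_isPrimitiveRoot.zpow_eq_one_iff_dvd, zpow_sub₀ zeta_ne_zero,
    div_eq_one_iff_eq (zpow_ne_zero _ zeta_ne_zero)]

lemma eq_of_zeta_zpow_eq [NeZero N] {u v : ℤ} (h : zeta N ^ u = zeta N ^ v)
    (huv : |u - v| < N) : u = v :=
  sub_eq_zero.1 (Int.eq_zero_of_abs_lt_dvd (zeta_zpow_eq_zeta_zpow_iff.1 h) huv)

lemma sum_range_zeta_zpow_mul [NeZero N] (c : ℤ) :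
    ∑ j ∈ Finset.range N, zeta N ^ (c * j) = if (N : ℤ) ∣ c then (N : ℂ) else 0 := by
  simp_rw [zpow_mul, zpow_natCast]
  split_ifs with h
  · simp [zeta_isPrimitiveRoot.zpow_eq_one_iff_dvd c |>.2 h]
  · have hc : zeta N ^ c ≠ 1 := mt (zeta_isPrimitiveRoot.zpow_eq_one_iff_dvd c).1 h
    have hN : (zeta N ^ c) ^ N = 1 := by
      rw [← zpow_natCast, ← zpow_mul, mul_comm, zpow_mul, zpow_natCast,
        zeta_isPrimitiveRoot.pow_eq_one, one_zpow]
    rw [geom_sum_eq hc, hN, sub_self, zero_div]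

lemma ofReal_sin_pi_mul_sub_div (u x : ℤ) :
    ((Real.sin (Real.pi * (u - x) / N) : ℝ) : ℂ)
      = (2 * Complex.I)⁻¹ * sqrtZeta N ^ u * sqrtZeta N ^ x * (zeta N ^ (-x) - zeta N ^ (-u)) := by
  have hsin : ((Real.sin (Real.pi * (u - x) / N) : ℝ) : ℂ)
      = (2 * Complex.I)⁻¹ * (sqrtZeta N ^ (u - x) - sqrtZeta N ^ (x - u)) := by
    rw [Complex.ofReal_sin, Complex.sin, sqrtZeta_zpow, sqrtZeta_zpow, mul_inv, Complex.inv_I]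
    push_cast
    ring_nf
  have hdiff : sqrtZeta N ^ u * sqrtZeta N ^ x * (zeta N ^ (-x) - zeta N ^ (-u))
      = sqrtZeta N ^ (u - x) - sqrtZeta N ^ (x - u) := by
    simp only [zeta_zpow_eq_sqrtZeta_zpow, mul_sub, ← zpow_add₀ sqrtZeta_ne_zero]
    ring_nf
  rw [hsin, ← hdiff]
  ring

end RootsOfUnity

lemma Int.prod_Ioo_eq_prod_range {M : Type*} [CommMonoid M] (f : ℤ → M) (a b : ℤ) :
    ∏ v ∈ Finset.Ioo a b, f v = ∏ k ∈ Finset.range (b - a - 1).toNat, f (a + k + 1) := by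
  change ∏ v ∈ (Finset.range (b - a - 1).toNat).map
    (Nat.castEmbedding.trans (addLeftEmbedding (a + 1))), f v = _
  rw [Finset.prod_map]
  exact Finset.prod_congr rfl fun k _ => congrArg f (add_right_comm a 1 (k : ℤ))

section Psi

variable {N : ℕ} {a : ℤ}

noncomputable def rootPoly (N : ℕ) (a : ℤ) : ℂ[X] :=
  ∏ v ∈ Finset.Ioo a (N - a), (X - C (zeta N ^ (-v)))

noncomputable def psiConst (N : ℕ) (a : ℤ) : ℂ :=
  ∏ v ∈ Finset.Ioo a (N - a), (2 * Complex.I)⁻¹ * sqrtZeta N ^ v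

lemma psiConst_ne_zero : psiConst N a ≠ 0 :=
  Finset.prod_ne_zero_iff.2 fun _ _ =>
    mul_ne_zero (inv_ne_zero (mul_ne_zero two_ne_zero Complex.I_ne_zero))
      (zpow_ne_zero _ sqrtZeta_ne_zero)

lemma psiInt_eq (h : 2 * a + 1 ≤ N) (x : ℤ) :
    psiInt N a x = psiConst N a * (zeta N ^ (a * x) * (rootPoly N a).eval (zeta N ^ (-x))) := by
  have hm : (((N : ℤ) - 2 * a - 1).toNat : ℤ) = N - 2 * a - 1 := Int.toNat_of_nonneg (by omega)
  have hsin : ∀ k : ℕ, ((Real.sin (Real.pi * ((a : ℝ) + (k + 1) - x) / N) : ℝ) : ℂ)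
      = (2 * Complex.I)⁻¹ * sqrtZeta N ^ (a + k + 1) * sqrtZeta N ^ x
        * (zeta N ^ (-x) - zeta N ^ (-(a + k + 1))) := by
    intro k
    rw [← ofReal_sin_pi_mul_sub_div]
    push_cast
    ring_nf
  have hprefactor : Complex.exp (Complex.I *
      ((Real.pi * ((4 * a + 1 - (N : ℤ) : ℤ) : ℝ) * (x : ℝ) / N : ℝ) : ℂ))
      = sqrtZeta N ^ ((4 * a + 1 - N) * x) := by
    rw [sqrtZeta_zpow]
    push_cast
    ring_nf
  have hexponent : 2 * (a * x) = (4 * a + 1 - N) * x + x * (N - 2 * a - 1) := by ring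
  rw [psiInt, Finset.prod_congr rfl fun k _ => hsin k, hprefactor,
    show (N : ℤ) - 2 * a - 1 = N - a - a - 1 by ring,
    ← Int.prod_Ioo_eq_prod_range fun v => (2 * Complex.I)⁻¹ * sqrtZeta N ^ v * sqrtZeta N ^ x
      * (zeta N ^ (-x) - zeta N ^ (-v)),
    Finset.prod_mul_distrib, Finset.prod_mul_distrib, Finset.prod_const, Int.card_Ioo, rootPoly,
    eval_prod, ← psiConst]
  simp only [eval_sub, eval_X, eval_C]
  rw [← zpow_natCast, ← zpow_mul, show (N : ℤ) - a - a - 1 = N - 2 * a - 1 by ring, hm,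
    zeta_zpow_eq_sqrtZeta_zpow (a * x), hexponent, zpow_add₀ sqrtZeta_ne_zero]
  ring

end Psi

lemma mem_dInterval_iff_s10 {N : ℕ} [NeZero N] {a : ℤ} (ha : a < N) (x : ZMod N) :
    x ∈ dInterval N a ↔ (x.val : ℤ) ≤ a ∨ N - a ≤ (x.val : ℤ) := by
  have hx := x.val_lt
  constructor
  · rintro ⟨j, hj, rfl⟩
    rw [abs_le] at hj
    rw [ZMod.val_intCast]
    rcases le_or_gt 0 j with hj0 | hj0
    · rw [Int.emod_eq_of_lt hj0 (by omega)]
      omega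
    · rw [Int.emod_eq_add_self_emod, Int.emod_eq_of_lt (by omega) (by omega)]
      omega
  · rintro (h | h)
    · exact ⟨x.val, by rw [abs_le]; omega, by simp⟩
    · exact ⟨x.val - N, by rw [abs_le]; omega, by simp⟩

section RootPoly

variable {N : ℕ} {a : ℤ}

lemma rootPoly_monic : (rootPoly N a).Monic :=
  monic_prod_of_monic _ _ fun _ _ => monic_X_sub_C _

lemma natDegree_rootPoly : (rootPoly N a).natDegree = ((N : ℤ) - a - a - 1).toNat := by
  rw [rootPoly, natDegree_prod_of_monic _ _ fun _ _ => monic_X_sub_C _]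
  simp

lemma eval_rootPoly_eq_zero {v : ℤ} (hv : v ∈ Finset.Ioo a (N - a)) :
    (rootPoly N a).eval (zeta N ^ (-v)) = 0 := by
  rw [rootPoly, eval_prod]
  exact Finset.prod_eq_zero hv (by simp)

lemma rootPoly_dvd [NeZero N] (ha : 0 ≤ a) {Q : ℂ[X]}
    (hQ : ∀ v ∈ Finset.Ioo a (N - a), Q.eval (zeta N ^ (-v)) = 0) : rootPoly N a ∣ Q := by
  refine Finset.prod_dvd_of_coprime (fun u hu v hv huv => ?_)
    fun v hv => dvd_iff_isRoot.2 (hQ v hv)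
  refine isCoprime_X_sub_C_of_isUnit_sub (sub_ne_zero.2 fun h => huv ?_).isUnit
  rw [Finset.coe_Ioo, Set.mem_Ioo] at hu hv
  have := eq_of_zeta_zpow_eq h (by rw [abs_lt]; omega)
  omega

end RootPoly

noncomputable def twistedEval (N : ℕ) (a : ℤ) : ℂ[X] →ₗ[ℂ] ZMod N → ℂ :=
  LinearMap.pi fun x => zeta N ^ (a * x.val) • leval (zeta N ^ (-(x.val : ℤ)))

section TwistedEval

variable {N : ℕ} {a : ℤ}

lemma twistedEval_apply (Q : ℂ[X]) (x : ZMod N) :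
    twistedEval N a Q x = zeta N ^ (a * x.val) * Q.eval (zeta N ^ (-(x.val : ℤ))) :=
  rfl

variable [NeZero N]

lemma twistedEval_mul_rootPoly_apply_eq_zero (ha : a < N) (Q : ℂ[X]) {x : ZMod N}
    (hx : x ∉ dInterval N a) : twistedEval N a (Q * rootPoly N a) x = 0 := by
  rw [mem_dInterval_iff_s10 ha] at hx
  rw [twistedEval_apply, eval_mul, eval_rootPoly_eq_zero (Finset.mem_Ioo.2 (by omega)), mul_zero,
    mul_zero]

lemma rootPoly_dvd_of_twistedEval_eq_zero (ha : 0 ≤ a) {Q : ℂ[X]}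
    (hQ : ∀ x ∉ dInterval N a, twistedEval N a Q x = 0) : rootPoly N a ∣ Q := by
  refine rootPoly_dvd ha fun v hv => ?_
  rw [Finset.mem_Ioo] at hv
  have hval : ((v.toNat : ZMod N)).val = v.toNat := ZMod.val_cast_of_lt (by omega)
  have hx : (v.toNat : ZMod N) ∉ dInterval N a := by
    rw [mem_dInterval_iff_s10 (by omega), hval]
    omega
  have := hQ _ hx
  rwa [twistedEval_apply, hval, Int.toNat_of_nonneg (by omega),
    mul_eq_zero, or_iff_right (zpow_ne_zero _ zeta_ne_zero)] at this

lemma eq_zero_of_twistedEval_eq_zero {Q : ℂ[X]} (hQ : Q.natDegree < N)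
    (h : twistedEval N a Q = 0) : Q = 0 := by
  refine eq_zero_of_natDegree_lt_card_of_eval_eq_zero Q
    (f := fun x : ZMod N => zeta N ^ (-(x.val : ℤ))) (fun x y hxy => ZMod.val_injective N ?_)
    (fun x => ?_) (by rwa [ZMod.card])
  · have := eq_of_zeta_zpow_eq hxy (by have := x.val_lt; have := y.val_lt; rw [abs_lt]; omega)
    omega
  · have := congrFun h x
    rwa [twistedEval_apply, Pi.zero_apply, mul_eq_zero, or_iff_right (zpow_ne_zero _ zeta_ne_zero)]
      at this

end TwistedEval

section Fourier

variable {N : ℕ} [NeZero N]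

omit [NeZero N] in
lemma exp_neg_two_pi_I_mul_div (j k : ℕ) :
    Complex.exp (-(2 * Real.pi * Complex.I * (j : ℂ) * (k : ℂ)) / (N : ℂ))
      = zeta N ^ (-((j : ℤ) * k)) := by
  rw [zeta_zpow]
  push_cast
  ring_nf

omit [NeZero N] in
lemma dft_apply (f : ZMod N → ℂ) (k : ZMod N) :
    dft N f k = ∑ j ∈ Finset.range N, zeta N ^ (-((j : ℤ) * k.val)) * f j := by
  simp only [dft, exp_neg_two_pi_I_mul_div]

lemma dft_inversion (f : ZMod N → ℂ) (x : ZMod N) :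
    f x = (N : ℂ)⁻¹ * ∑ k ∈ Finset.range N, zeta N ^ ((k : ℤ) * x.val) * dft N f k := by
  have hx := x.val_lt
  have horth : ∀ j ∈ Finset.range N, ∑ k ∈ Finset.range N, zeta N ^ ((x.val - j : ℤ) * k)
      = if x.val = j then (N : ℂ) else 0 := by
    intro j hj
    rw [Finset.mem_range] at hj
    rw [sum_range_zeta_zpow_mul]
    refine if_congr ⟨fun h => ?_, fun h => by rw [h, sub_self]; exact dvd_zero _⟩ rfl rfl
    have := Int.eq_zero_of_abs_lt_dvd h (by rw [abs_lt]; omega)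
    omega
  calc f x = (N : ℂ)⁻¹ * ∑ j ∈ Finset.range N,
        (∑ k ∈ Finset.range N, zeta N ^ ((x.val - j : ℤ) * k)) * f j := by
        rw [Finset.sum_congr rfl fun j hj => by rw [horth j hj]]
        simp only [ite_mul, zero_mul, Finset.sum_ite_eq, Finset.mem_range, hx, if_true,
          ZMod.natCast_zmod_val]
        rw [← mul_assoc, inv_mul_cancel₀ (Nat.cast_ne_zero.2 (NeZero.ne N)), one_mul]
    _ = _ := by
        simp_rw [Finset.sum_mul]
        rw [Finset.sum_comm]
        refine congrArg _ (Finset.sum_congr rfl fun k hk => ?_)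
        rw [dft_apply, ZMod.val_cast_of_lt (Finset.mem_range.1 hk), Finset.mul_sum]
        refine Finset.sum_congr rfl fun j _ => ?_
        rw [← mul_assoc, ← zpow_add₀ zeta_ne_zero]
        ring_nf

lemma dft_twistedEval_eq_zero {a : ℤ} {Q : ℂ[X]} (hQ : (Q.natDegree : ℤ) ≤ 2 * a) {k : ZMod N}
    (hk : k ∉ dInterval N a) : dft N (twistedEval N a Q) k = 0 := by
  have hterm : ∀ j ∈ Finset.range N, zeta N ^ (-((j : ℤ) * k.val)) * twistedEval N a Q j
      = ∑ t ∈ Q.support, Q.coeff t * zeta N ^ ((a - t - k.val) * j) := by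
    intro j hj
    rw [twistedEval_apply, ZMod.val_cast_of_lt (Finset.mem_range.1 hj), eval_eq_sum, sum_def,
      Finset.mul_sum, Finset.mul_sum]
    refine Finset.sum_congr rfl fun t _ => ?_
    rw [← zpow_natCast, ← zpow_mul, show (a - t - k.val) * (j : ℤ)
        = -(j * k.val) + (a * j + -j * t) by ring, zpow_add₀ zeta_ne_zero, zpow_add₀ zeta_ne_zero]
    ring
  rw [dft_apply, Finset.sum_congr rfl hterm, Finset.sum_comm]
  refine Finset.sum_eq_zero fun t ht => ?_
  rw [← Finset.mul_sum, sum_range_zeta_zpow_mul, if_neg, mul_zero]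
  intro hdvd
  have ht := le_natDegree_of_mem_supp t ht
  refine hk ⟨a - t, by rw [abs_le]; omega, ?_⟩
  have hkval : ((k.val : ℤ) : ZMod N) = k := by simp
  rw [← hkval, ZMod.intCast_eq_intCast_iff_dvd_sub]
  simpa [← sub_add, sub_right_comm] using hdvd.neg_right

lemma exists_twistedEval_eq_of_dft {a : ℤ} (ha : 0 ≤ a) (h : 2 * a + 1 ≤ N)
    {f : ZMod N → ℂ} (hf : ∀ k ∉ dInterval N a, dft N f k = 0) :
    ∃ Q : ℂ[X], (Q.natDegree : ℤ) ≤ 2 * a ∧ twistedEval N a Q = f := by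
  have hN : (0 : ℤ) < N := by exact_mod_cast Nat.pos_of_neZero N
  -- `e k ≡ a - k [ZMOD N]`, so `twistedEval N a (X ^ e k)` is the character `x ↦ ζ^{k x}`
  set e : ℕ → ℕ := fun k => ((a - k) % N).toNat
  have he_cast : ∀ k, (e k : ℤ) = (a - k) % N :=
    fun k => Int.toNat_of_nonneg (Int.emod_nonneg _ hN.ne')
  have he_le : ∀ k < N, dft N f k ≠ 0 → (e k : ℤ) ≤ 2 * a := by
    intro k hk hfk
    have hval : ((k : ZMod N)).val = k := ZMod.val_cast_of_lt hk
    have hmem : (k : ZMod N) ∈ dInterval N a := by_contra fun h => hfk (hf _ h)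
    rw [mem_dInterval_iff_s10 (by omega), hval] at hmem
    rw [he_cast]
    rcases hmem with h | h
    · rw [Int.emod_eq_of_lt (by omega) (by omega)]
      omega
    · rw [Int.emod_eq_add_self_emod, Int.emod_eq_of_lt (by omega) (by omega)]
      omega
  refine ⟨∑ k ∈ Finset.range N, C (dft N f k / N) * X ^ e k, ?_, ?_⟩
  · have : (∑ k ∈ Finset.range N, C (dft N f k / N) * X ^ e k).natDegree ≤ (2 * a).toNat := by
      refine natDegree_sum_le_of_forall_le _ _ fun k hk => ?_
      by_cases hfk : dft N f k = 0
      · simp [hfk]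
      · have := he_le k (Finset.mem_range.1 hk) hfk
        exact (natDegree_C_mul_X_pow_le _ _).trans (by omega)
    omega
  · funext x
    rw [dft_inversion f x, twistedEval_apply, eval_finsetSum, Finset.mul_sum, Finset.mul_sum]
    refine Finset.sum_congr rfl fun k _ => ?_
    have hchar : zeta N ^ (a * x.val) * (zeta N ^ (-(x.val : ℤ))) ^ e k
        = zeta N ^ ((k : ℤ) * x.val) := by
      rw [← zpow_natCast, ← zpow_mul, ← zpow_add₀ zeta_ne_zero, zeta_zpow_eq_zeta_zpow_iff, he_cast]
      exact ⟨x.val * ((a - k) / N),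
        by linear_combination -(x.val : ℤ) * Int.emod_add_mul_ediv (a - k) N⟩
    rw [eval_mul, eval_C, eval_pow, eval_X, ← hchar]
    ring

end Fourier

lemma linearIndependent_fin_X_pow (R : Type*) [CommRing R] (n : ℕ) :
    LinearIndependent R fun j : Fin n => (X : R[X]) ^ (j : ℕ) := by
  simpa [Function.comp_def, coe_basisMonomials, X_pow_eq_monomial] using
    (basisMonomials R).linearIndependent.comp _ Fin.val_injective

lemma span_range_fin_X_pow (R : Type*) [CommRing R] (n : ℕ) :
    Submodule.span R (Set.range fun j : Fin n => (X : R[X]) ^ (j : ℕ)) = degreeLT R n := by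
  classical
  rw [degreeLT_eq_span_X_pow]
  congr 1
  ext
  simp [Fin.exists_iff]

noncomputable def basisMap (N : ℕ) (a : ℤ) : ℂ[X] →ₗ[ℂ] ZMod N → ℂ :=
  psiConst N a • twistedEval N a ∘ₗ LinearMap.mulRight ℂ (rootPoly N a)

section BasisMap

variable {N : ℕ} {a : ℤ}

lemma basisMap_apply (S : ℂ[X]) :
    basisMap N a S = psiConst N a • twistedEval N a (S * rootPoly N a) :=
  rfl

lemma basisFam_eq_basisMap (h : 2 * a + 1 ≤ N) (j : ℕ) : basisFam N a j = basisMap N a (X ^ j) := by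
  funext x
  rw [basisFam, psiZ, psiInt_eq h, basisMap_apply, Pi.smul_apply, twistedEval_apply, eval_mul,
    eval_pow, eval_X, smul_eq_mul, ← zpow_natCast, ← zpow_mul, mul_comm (-(x.val : ℤ)),
    neg_mul_comm]
  ring

lemma natDegree_mul_rootPoly_le (h : 2 * a + 1 ≤ N) (hr : 1 ≤ 4 * a + 2 - N) {S : ℂ[X]}
    (hS : S ∈ degreeLT ℂ (4 * a + 2 - N).toNat) : ((S * rootPoly N a).natDegree : ℤ) ≤ 2 * a := by
  have hS' : S.natDegree < (4 * a + 2 - N).toNat := by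
    rcases eq_or_ne S 0 with rfl | hS0
    · rw [natDegree_zero]
      omega
    · exact (natDegree_lt_iff_degree_lt hS0).2 (mem_degreeLT.1 hS)
  have := natDegree_mul_le (p := S) (q := rootPoly N a)
  rw [natDegree_rootPoly] at this
  omega

variable [NeZero N]

lemma basisMap_mem_Ca (h : 2 * a + 1 ≤ N) (hr : 1 ≤ 4 * a + 2 - N) {S : ℂ[X]}
    (hS : S ∈ degreeLT ℂ (4 * a + 2 - N).toNat) : basisMap N a S ∈ Ca N a := by
  refine ⟨fun x hx => ?_, fun k hk => ?_⟩
  · rw [basisMap_apply, Pi.smul_apply, twistedEval_mul_rootPoly_apply_eq_zero (by omega) _ hx,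
      smul_zero]
  · rw [basisMap_apply, map_smul, Pi.smul_apply]
    exact smul_eq_zero_of_right _ (dft_twistedEval_eq_zero (natDegree_mul_rootPoly_le h hr hS) hk)

lemma Ca_le_map_basisMap (h : 2 * a + 1 ≤ N) (hr : 1 ≤ 4 * a + 2 - N) :
    Ca N a ≤ (degreeLT ℂ (4 * a + 2 - N).toNat).map (basisMap N a) := by
  have ha : 0 ≤ a := by omega
  rintro f ⟨hsupp, hdft⟩
  obtain ⟨Q, hQ, rfl⟩ := exists_twistedEval_eq_of_dft ha h hdft
  obtain ⟨S, rfl⟩ := rootPoly_dvd_of_twistedEval_eq_zero ha hsupp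
  refine ⟨(psiConst N a)⁻¹ • S, Submodule.smul_mem _ _ ?_, ?_⟩
  · rcases eq_or_ne S 0 with rfl | hS0
    · exact Submodule.zero_mem _
    · rw [rootPoly_monic.natDegree_mul' hS0, natDegree_rootPoly] at hQ
      exact mem_degreeLT.2 ((natDegree_lt_iff_degree_lt hS0).1 (by omega))
  · rw [map_smul, basisMap_apply, smul_smul, inv_mul_cancel₀ psiConst_ne_zero, one_smul, mul_comm]

lemma map_basisMap_degreeLT (h : 2 * a + 1 ≤ N) (hr : 1 ≤ 4 * a + 2 - N) :
    (degreeLT ℂ (4 * a + 2 - N).toNat).map (basisMap N a) = Ca N a :=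
  le_antisymm (Submodule.map_le_iff_le_comap.2 fun _ hS => basisMap_mem_Ca h hr hS)
    (Ca_le_map_basisMap h hr)

lemma disjoint_degreeLT_ker_basisMap (h : 2 * a + 1 ≤ N) (hr : 1 ≤ 4 * a + 2 - N) :
    Disjoint (degreeLT ℂ (4 * a + 2 - N).toNat) (LinearMap.ker (basisMap N a)) := by
  refine Submodule.disjoint_def.2 fun S hS hker => ?_
  rw [LinearMap.mem_ker, basisMap_apply, smul_eq_zero, or_iff_right psiConst_ne_zero] at hker
  have hdeg := natDegree_mul_rootPoly_le h hr hS
  exact (mul_eq_zero.1 (eq_zero_of_twistedEval_eq_zero (by omega) hker)).resolve_right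
    rootPoly_monic.ne_zero

end BasisMap

theorem statement10 (N : ℕ) (hN : 0 < N) (a : ℤ) (h1 : 2 * a + 1 ≤ (N : ℤ))
    (hr : 1 ≤ 4 * a + 2 - (N : ℤ)) :
    (∀ x : ZMod N, x ∉ dInterval N a → psiZ N a x = 0) ∧
    (∀ j : Fin (4 * a + 2 - (N : ℤ)).toNat, basisFam N a j ∈ Ca N a) ∧
    LinearIndependent ℂ (fun j : Fin (4 * a + 2 - (N : ℤ)).toNat => basisFam N a j) ∧
    Submodule.span ℂ
        (Set.range (fun j : Fin (4 * a + 2 - (N : ℤ)).toNat => basisFam N a j))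
      = Ca N a := by
  have : NeZero N := ⟨hN.ne'⟩
  set r := (4 * a + 2 - (N : ℤ)).toNat
  have hfam : (fun j : Fin r => basisFam N a j) = basisMap N a ∘ fun j : Fin r => X ^ (j : ℕ) :=
    funext fun j => basisFam_eq_basisMap h1 j
  have hspan : Submodule.span ℂ (Set.range fun j : Fin r => basisFam N a j) = Ca N a := by
    rw [hfam, Set.range_comp, Submodule.span_image, span_range_fin_X_pow,
      map_basisMap_degreeLT h1 hr]
  have hmem : ∀ j : Fin r, basisFam N a j ∈ Ca N a :=
    fun j => hspan ▸ Submodule.subset_span ⟨j, rfl⟩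
  refine ⟨fun x hx => ?_, hmem, ?_, hspan⟩
  · have hpsi : psiZ N a = basisFam N a 0 := by
      funext x
      simp [basisFam]
    exact hpsi ▸ (hmem ⟨0, by omega⟩).1 x hx
  · rw [hfam]
    exact (linearIndependent_fin_X_pow ℂ r).map
      (span_range_fin_X_pow ℂ r ▸ disjoint_degreeLT_ker_basisMap h1 hr)
end

section
/- Let N = 4m with m ≥ 1. Define f, g : ℤ/Nℤ → ℂ as the functions induced by the N-periodic functions f(x) = cos(πx/N) · ∏_{k=1}^{2m−1} sin(π(m+k−x)/N) and g(x) = sin(πx/N) · ∏_{k=1}^{2m−1} sin(π(m+k−x)/N) (both vanish outside the discrete interval [−m,m]). Then F_N f = √N · f and F_N g = −i√N · g. -/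
open Complex

/-!
Write `P(x) = ∏_{k=1}^{2m-1} sin (π (m + k - x) / N)` and `h = f + i g`, so that
`h(x) = exp (π i x / N) P(x)`. Extending the product by one factor at either end shows
`sin (π (m + x) / N) P(x) = sin (π (m + 1 - x) / N) P(x - 1)`, which makes `h` a solution of
`(i - e(-j)) h(j) = (i e(-(j - 1)) - 1) h(j - 1)`, where `e` is the standard character of `ℤ/Nℤ`.
The DFT swaps multiplication by `e(-j)` with translation, so `𝓕 h` solves the first-order
recurrence `u(k + 1) (1 + i e(-k)) = u(k) (i + e(-k))`; so does `f + g = √2 sin (π (m + x) / N) P(x)`.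
The coefficients vanish only at `k = 3m` and `k = m` respectively, hence the solutions form a line
and `𝓕 h = κ (f + g)`. As `f` is even and `g` odd, taking even and odd parts gives `𝓕 f = κ f` and
`𝓕 g = -iκ g`. Fourier inversion gives `κ² = N`, and `κ > 0` because `f ≥ 0` (it is supported on
`[-m, m]`, where it is positive), so that `κ f(0) = ∑ f > 0`.
-/

open Finset in
theorem dft_eq_zmodDFT (N : ℕ) [NeZero N] (Φ : ZMod N → ℂ) : dft N Φ = ZMod.dft Φ := by
  funext k
  refine sum_nbij' (fun j ↦ (j : ZMod N)) ZMod.val (by simp) (by simp [ZMod.val_lt])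
    (fun j hj ↦ ZMod.val_cast_of_lt (mem_range.1 hj)) (fun x _ ↦ ZMod.natCast_zmod_val x)
    fun j _ ↦ ?_
  have : -((j : ZMod N) * k) = Int.cast (-(j * k.val : ℤ)) := by push_cast; simp
  rw [smul_eq_mul, this, ZMod.stdAddChar_coe]
  push_cast
  ring_nf

namespace ZMod

variable {N : ℕ} [NeZero N]

section Translation

variable {E : Type*} [AddCommGroup E] [Module ℂ E]

lemma dft_stdAddChar_smul (Φ : ZMod N → E) (a k : ZMod N) :
    𝓕 (fun j ↦ stdAddChar (-(j * a)) • Φ j) k = 𝓕 Φ (k + a) := by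
  simp only [dft_apply, smul_smul, ← AddChar.map_add_eq_mul, mul_add, neg_add]

lemma dft_comp_sub (Φ : ZMod N → E) (a k : ZMod N) :
    𝓕 (fun j ↦ Φ (j - a)) k = stdAddChar (-(a * k)) • 𝓕 Φ k := by
  simp only [dft_apply, Finset.smul_sum, smul_smul, ← AddChar.map_add_eq_mul]
  exact Fintype.sum_equiv (Equiv.subRight a) _ _ fun j ↦ by
    rw [Equiv.subRight_apply]
    congr 2
    ring

end Translation

lemma dft_mul_succ_eq_of_recurrence {Φ : ZMod N → ℂ} {a b c d : ℂ}
    (h : ∀ j, (a + b * stdAddChar (-j)) * Φ j = (c + d * stdAddChar (-(j - 1))) * Φ (j - 1))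
    (k : ZMod N) :
    𝓕 Φ (k + 1) * (b - d * stdAddChar (-k)) = 𝓕 Φ k * (c * stdAddChar (-k) - a) := by
  let Ψ : ZMod N → ℂ := fun j ↦ stdAddChar (-(j * 1)) • Φ j
  have hfun : a • Φ + b • Ψ = c • (fun j ↦ Φ (j - 1)) + d • (fun j ↦ Ψ (j - 1)) := by
    funext j
    simpa [Ψ, add_mul, mul_assoc] using h j
  have := congrFun (congrArg 𝓕 hfun) k
  simp only [map_add, dft_const_smul, Pi.add_apply, Pi.smul_apply, dft_comp_sub] at this
  rw [dft_stdAddChar_smul] at this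
  simp only [smul_eq_mul, one_mul] at this
  linear_combination this

/-- Forward propagation from `0` reaches `p`; backward propagation from `0 = N` reaches `q + 1`. -/
lemma eq_zero_of_recurrence {K : Type*} [MulZeroClass K] [NoZeroDivisors K] {w A C : ZMod N → K}
    {p q : ℕ} (hqp : q ≤ p) (hpN : p < N) (hA : ∀ k, A k = 0 → k = p) (hC : ∀ k, C k = 0 → k = q)
    (hrec : ∀ k, w (k + 1) * A k = w k * C k) (h0 : w 0 = 0) : w = 0 := by
  have forward (n : ℕ) (hn : n ≤ p) : w n = 0 := by
    induction n with
    | zero => simpa using h0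
    | succ n ih =>
      have h := hrec n
      rw [ih (by omega), zero_mul] at h
      rw [Nat.cast_succ]
      refine (mul_eq_zero.1 h).resolve_right fun hAn ↦ ?_
      have := congrArg val (hA _ hAn)
      rw [val_natCast_of_lt (by omega), val_natCast_of_lt hpN] at this
      omega
  have backward (n : ℕ) (hn : q + n < N) : w (-n) = 0 := by
    induction n with
    | zero => simpa using h0
    | succ n ih =>
      have h := hrec (-(n + 1))
      rw [show -((n : ZMod N) + 1) + 1 = -n by ring, ih (by omega), zero_mul] at h
      push_cast
      refine (mul_eq_zero.1 h.symm).resolve_right fun hCn ↦ ?_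
      have hdvd : N ∣ q + (n + 1) := by
        rw [← natCast_eq_zero_iff, Nat.cast_add, ← hC _ hCn]
        push_cast
        ring
      exact absurd (Nat.le_of_dvd (by omega) hdvd) (by omega)
  funext x
  rw [← natCast_zmod_val x]
  by_cases hx : x.val ≤ p
  · exact forward _ hx
  · have h := backward (N - x.val) (by have := val_lt x; omega)
    rwa [Nat.cast_sub (val_lt x).le, natCast_self, zero_sub, neg_neg] at h

lemma eq_smul_of_recurrence {K : Type*} [Field K] {u v A C : ZMod N → K} {p q : ℕ} (hqp : q ≤ p)
    (hpN : p < N) (hA : ∀ k, A k = 0 → k = p) (hC : ∀ k, C k = 0 → k = q)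
    (hu : ∀ k, u (k + 1) * A k = u k * C k) (hv : ∀ k, v (k + 1) * A k = v k * C k)
    (hv0 : v 0 ≠ 0) : u = (u 0 / v 0) • v := by
  have := eq_zero_of_recurrence (w := fun k ↦ u k * v 0 - v k * u 0) hqp hpN hA hC
    (fun k ↦ by linear_combination v 0 * hu k - u 0 * hv k) (by ring)
  funext k
  have hk := congrFun this k
  simp only [Pi.zero_apply, sub_eq_zero] at hk
  rw [Pi.smul_apply, smul_eq_mul, div_mul_eq_mul_div, eq_div_iff hv0, hk, mul_comm]

lemma dft_eq_smul_of_dft_add_I_smul {Φ Ψ : ZMod N → ℂ} {κ : ℂ} (hΦ : Φ.Even) (hΨ : Ψ.Odd)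
    (h : 𝓕 (Φ + I • Ψ) = κ • (Φ + Ψ)) : 𝓕 Φ = κ • Φ ∧ 𝓕 Ψ = (-I * κ) • Ψ := by
  rw [map_add, dft_const_smul, smul_add] at h
  have hsplit : 𝓕 Φ - κ • Φ = κ • Ψ - I • 𝓕 Ψ := by
    rw [sub_eq_sub_iff_add_eq_add, h, add_comm]
  have heven : (𝓕 Φ - κ • Φ).Even := fun x ↦ by
    simp only [Pi.sub_apply, Pi.smul_apply, dft_even_iff.2 hΦ x, hΦ x]
  have hodd : (𝓕 Φ - κ • Φ).Odd := by
    rw [hsplit]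
    intro x
    simp only [Pi.sub_apply, Pi.smul_apply, smul_eq_mul, dft_odd_iff.2 hΨ x, hΨ x]
    ring
  have h0 := Function.zero_of_even_and_odd heven hodd
  refine ⟨sub_eq_zero.1 h0, funext fun x ↦ ?_⟩
  have := congrFun (h0 ▸ hsplit) x
  simp only [Pi.zero_apply, Pi.sub_apply, Pi.smul_apply, smul_eq_mul] at this ⊢
  linear_combination -I * this + 𝓕 Ψ x * I_sq

lemma dft_eigenvalue_eq_sqrt {φ : ZMod N → ℝ} (hφ : ∀ x, 0 ≤ φ x) (hφ0 : 0 < φ 0) {κ : ℂ}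
    (h : 𝓕 (fun x ↦ (φ x : ℂ)) = κ • fun x ↦ (φ x : ℂ)) : κ = Real.sqrt N := by
  have hsum : κ * φ 0 = ∑ x, (φ x : ℂ) := by
    simpa using (congrFun h 0).symm.trans (dft_apply_zero _)
  have hκ : κ = ((∑ x, φ x) / φ 0 : ℝ) := by
    rw [ofReal_div, ofReal_sum, eq_div_iff (ofReal_ne_zero.2 hφ0.ne'), hsum]
  have hsq : κ ^ 2 = N := by
    have := congrFun (dft_dft (fun x ↦ (φ x : ℂ))) 0
    rw [h, dft_const_smul, h] at this
    simp only [Pi.smul_apply, smul_eq_mul, neg_zero] at this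
    exact mul_right_cancel₀ (ofReal_ne_zero.2 hφ0.ne') (by linear_combination this)
  have hpos : 0 < (∑ x, φ x) / φ 0 :=
    div_pos (Finset.sum_pos' (fun x _ ↦ hφ x) ⟨0, Finset.mem_univ _, hφ0⟩) hφ0
  rw [hκ] at hsq ⊢
  congr 1
  rw [eq_comm, Real.sqrt_eq_iff_mul_self_eq_of_pos hpos]
  exact_mod_cast (sq _).symm.trans hsq

end ZMod

lemma Function.Periodic.apply_val_intCast {n : ℕ} [NeZero n] {α : Type*} {F : ℝ → α}
    (hF : Function.Periodic F n) (t : ℤ) : F ((t : ZMod n).val) = F t := by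
  have h := ZMod.val_intCast (n := n) t
  rw [Int.emod_def] at h
  have : (((t : ZMod n).val : ℕ) : ℝ) = t - (t / n : ℤ) * n := by
    rw [← Int.cast_natCast, h]
    push_cast
    ring
  rw [this, hF.sub_int_mul_eq]

lemma Function.Periodic.even_comp_val {n : ℕ} [NeZero n] {α : Type*} {F : ℝ → α}
    (hF : Function.Periodic F n) (he : ∀ x, F (-x) = F x) :
    Function.Even fun x : ZMod n ↦ F x.val := fun x ↦ by
  obtain ⟨t, rfl⟩ := ZMod.intCast_surjective x
  show F _ = F _
  rw [← Int.cast_neg, hF.apply_val_intCast, hF.apply_val_intCast, Int.cast_neg, he]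

lemma Function.Periodic.odd_comp_val {n : ℕ} [NeZero n] {α : Type*} [Neg α] {F : ℝ → α}
    (hF : Function.Periodic F n) (ho : ∀ x, F (-x) = -F x) :
    Function.Odd fun x : ZMod n ↦ F x.val := fun x ↦ by
  obtain ⟨t, rfl⟩ := ZMod.intCast_surjective x
  show F _ = -F _
  rw [← Int.cast_neg, hF.apply_val_intCast, hF.apply_val_intCast, Int.cast_neg, ho]

namespace SinProduct

open Finset Real ZMod

noncomputable def sinN (m : ℕ) (x : ℝ) : ℝ := Real.sin (π * x / (4 * m : ℕ))

noncomputable def cosN (m : ℕ) (x : ℝ) : ℝ := Real.cos (π * x / (4 * m : ℕ))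

noncomputable def halfChar (m : ℕ) (x : ℝ) : ℂ := cexp (↑(π * x / (4 * m : ℕ)) * I)

noncomputable def sinProd (m : ℕ) (x : ℝ) : ℝ :=
  ∏ k ∈ range (2 * m - 1), sinN m (m + (k + 1) - x)

noncomputable def f (m : ℕ) (x : ℝ) : ℝ := cosN m x * sinProd m x

noncomputable def g (m : ℕ) (x : ℝ) : ℝ := sinN m x * sinProd m x

noncomputable def fMod (m : ℕ) : ZMod (4 * m) → ℂ := fun x ↦ (f m x.val : ℂ)

noncomputable def gMod (m : ℕ) : ZMod (4 * m) → ℂ := fun x ↦ (g m x.val : ℂ)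

variable {m : ℕ}

lemma sinN_neg (x : ℝ) : sinN m (-x) = -sinN m x := by
  rw [sinN, sinN, mul_neg, neg_div, Real.sin_neg]

lemma cosN_neg (x : ℝ) : cosN m (-x) = cosN m x := by
  rw [cosN, cosN, mul_neg, neg_div, Real.cos_neg]

lemma halfChar_add (x y : ℝ) : halfChar m (x + y) = halfChar m x * halfChar m y := by
  simp only [halfChar, mul_add, add_div, ofReal_add, add_mul, Complex.exp_add]

lemma halfChar_zero : halfChar m 0 = 1 := by simp [halfChar]

lemma halfChar_eq (x : ℝ) : halfChar m x = cosN m x + I * sinN m x := by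
  rw [halfChar, Complex.exp_mul_I, cosN, sinN, ofReal_cos, ofReal_sin]
  ring

lemma halfChar_sub_halfChar_neg (x : ℝ) : halfChar m x - halfChar m (-x) = 2 * I * sinN m x := by
  rw [halfChar_eq, halfChar_eq, sinN_neg, cosN_neg]
  push_cast
  ring

lemma halfChar_add_halfChar_neg (x : ℝ) : halfChar m x + halfChar m (-x) = 2 * cosN m x := by
  rw [halfChar_eq, halfChar_eq, sinN_neg, cosN_neg]
  push_cast
  ring

lemma sinProd_natCast_eq_zero {n : ℕ} (h1 : m < n) (h2 : n < 3 * m) : sinProd m n = 0 := by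
  refine prod_eq_zero (i := n - m - 1) (mem_range.2 (by omega)) ?_
  have : ((n - m - 1 : ℕ) : ℝ) + m + 1 = n := by exact_mod_cast (by omega : n - m - 1 + m + 1 = n)
  rw [sinN, show (m : ℝ) + ((n - m - 1 : ℕ) + 1) - n = 0 by linarith, mul_zero, zero_div,
    Real.sin_zero]

lemma f_zero : f m 0 = sinProd m 0 := by simp [f, cosN]

lemma g_zero : g m 0 = 0 := by simp [g, sinN]

lemma fMod_apply (x : ZMod (4 * m)) : fMod m x =
    ((Real.cos (Real.pi * (x.val : ℝ) / (4 * m : ℕ)) : ℝ) : ℂ) *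
      ∏ k ∈ Finset.range (2 * m - 1),
        ((Real.sin (Real.pi * ((m : ℝ) + (k + 1) - (x.val : ℝ)) / (4 * m : ℕ)) : ℝ) : ℂ) := by
  simp only [fMod, f, cosN, sinProd, sinN]
  push_cast
  rfl

lemma gMod_apply (x : ZMod (4 * m)) : gMod m x =
    ((Real.sin (Real.pi * (x.val : ℝ) / (4 * m : ℕ)) : ℝ) : ℂ) *
      ∏ k ∈ Finset.range (2 * m - 1),
        ((Real.sin (Real.pi * ((m : ℝ) + (k + 1) - (x.val : ℝ)) / (4 * m : ℕ)) : ℝ) : ℂ) := by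
  simp only [gMod, g, sinProd, sinN]
  push_cast
  rfl

variable [NeZero m]

lemma angle_four_mul : π * (4 * m : ℕ) / (4 * m : ℕ) = π :=
  mul_div_cancel_right₀ _ (by exact_mod_cast NeZero.ne _)

lemma angle_m : π * m / (4 * m : ℕ) = π / 4 := by
  have : (m : ℝ) ≠ 0 := by exact_mod_cast NeZero.ne _
  push_cast
  field_simp

lemma angle_two_mul_m : π * (2 * m) / (4 * m : ℕ) = π / 2 := by
  have : (m : ℝ) ≠ 0 := by exact_mod_cast NeZero.ne _
  push_cast
  field_simp
  ring

lemma sinN_antiperiodic : Function.Antiperiodic (sinN m) (4 * m : ℕ) := fun x ↦ by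
  simp only [sinN, mul_add, add_div, angle_four_mul, Real.sin_add_pi]

lemma cosN_antiperiodic : Function.Antiperiodic (cosN m) (4 * m : ℕ) := fun x ↦ by
  simp only [cosN, mul_add, add_div, angle_four_mul, Real.cos_add_pi]

lemma sinN_four_mul_sub (x : ℝ) : sinN m ((4 * m : ℕ) - x) = sinN m x := by
  simp only [sinN, mul_sub, sub_div, angle_four_mul, Real.sin_pi_sub]

lemma cosN_eq_sinN (x : ℝ) : cosN m x = sinN m (2 * m - x) := by
  rw [sinN, mul_sub, sub_div, angle_two_mul_m, Real.sin_pi_div_two_sub, cosN]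

lemma cosN_add_sinN (x : ℝ) : cosN m x + sinN m x = √2 * sinN m (m + x) := by
  simp only [cosN, sinN, mul_add, add_div, angle_m, Real.sin_add, Real.sin_pi_div_four,
    Real.cos_pi_div_four]
  ring_nf
  rw [Real.sq_sqrt zero_le_two]
  ring

lemma sinN_pos {x : ℝ} (h0 : 0 < x) (h1 : x < (4 * m : ℕ)) : 0 < sinN m x := by
  have hN : (0 : ℝ) < (4 * m : ℕ) := by exact_mod_cast Nat.pos_of_ne_zero (NeZero.ne _)
  apply Real.sin_pos_of_pos_of_lt_pi (by positivity)
  rw [div_lt_iff₀ hN]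
  nlinarith [Real.pi_pos]

lemma cosN_nonneg {x : ℝ} (hx : |x| ≤ 2 * m) : 0 ≤ cosN m x := by
  have hN : (0 : ℝ) < (4 * m : ℕ) := by exact_mod_cast Nat.pos_of_ne_zero (NeZero.ne _)
  obtain ⟨hx1, hx2⟩ := abs_le.1 hx
  apply Real.cos_nonneg_of_neg_pi_div_two_le_of_le
  · rw [le_div_iff₀ hN]
    push_cast
    nlinarith [Real.pi_pos]
  · rw [div_le_iff₀ hN]
    push_cast
    nlinarith [Real.pi_pos]

lemma halfChar_two_mul_m : halfChar m (2 * m) = I := by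
  rw [halfChar, angle_two_mul_m]
  push_cast
  exact Complex.exp_pi_div_two_mul_I

lemma stdAddChar_intCast (t : ℤ) : stdAddChar (t : ZMod (4 * m)) = halfChar m (2 * t) := by
  rw [stdAddChar_coe, halfChar]
  congr 1
  push_cast
  ring

lemma stdAddChar_m : stdAddChar (m : ZMod (4 * m)) = I := by
  rw [← Int.cast_natCast, stdAddChar_intCast, Int.cast_natCast, halfChar_two_mul_m]

lemma sinProd_antiperiodic : Function.Antiperiodic (sinProd m) (4 * m : ℕ) := fun x ↦ by
  have hm := NeZero.pos m
  simp only [sinProd, ← sub_sub, sinN_antiperiodic.sub_eq, prod_neg, card_range]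
  rw [Odd.neg_one_pow ⟨m - 1, by omega⟩, neg_one_mul]

lemma sinProd_neg (x : ℝ) : sinProd m (-x) = sinProd m x := by
  rw [sinProd, sinProd, ← prod_range_reflect]
  refine prod_congr rfl fun k hk ↦ ?_
  have hk : ((2 * m - 1 - 1 - k : ℕ) : ℝ) + k + 2 = 2 * m := by
    have := mem_range.1 hk
    exact_mod_cast (by omega : 2 * m - 1 - 1 - k + k + 2 = 2 * m)
  rw [← sinN_four_mul_sub]
  congr 1
  push_cast
  linarith

/-- Both sides are `∏_{k=1}^{2m} sin (π (m + k - x) / N)`. -/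
lemma sinN_mul_sinProd (x : ℝ) :
    sinN m (m + x) * sinProd m x = sinN m (m + 1 - x) * sinProd m (x - 1) := by
  have hm := NeZero.pos m
  trans ∏ k ∈ range (2 * m), sinN m (m + (k + 1) - x)
  · rw [show 2 * m = 2 * m - 1 + 1 by omega, prod_range_succ, sinProd, mul_comm,
      ← sinN_four_mul_sub (m + x)]
    congr 2
    push_cast [show 1 ≤ 2 * m by omega]
    ring
  · rw [show 2 * m = 2 * m - 1 + 1 by omega, prod_range_succ', sinProd, mul_comm]
    congr 1
    · norm_num
    · refine prod_congr rfl fun k _ ↦ ?_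
      push_cast
      ring_nf

lemma sinProd_pos {x : ℝ} (hx : |x| ≤ m) : 0 < sinProd m x := by
  obtain ⟨hx1, hx2⟩ := abs_le.1 hx
  refine prod_pos fun k hk ↦ sinN_pos ?_ ?_
  · have : (0 : ℝ) ≤ k := k.cast_nonneg
    linarith
  · have : (k : ℝ) + 2 ≤ 2 * m := by
      have := mem_range.1 hk
      exact_mod_cast (by omega : k + 2 ≤ 2 * m)
    push_cast
    linarith

lemma f_periodic : Function.Periodic (f m) (4 * m : ℕ) :=
  cosN_antiperiodic.mul sinProd_antiperiodic

lemma g_periodic : Function.Periodic (g m) (4 * m : ℕ) :=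
  sinN_antiperiodic.mul sinProd_antiperiodic

lemma f_neg (x : ℝ) : f m (-x) = f m x := by rw [f, f, cosN_neg, sinProd_neg]

lemma g_neg (x : ℝ) : g m (-x) = -g m x := by rw [g, g, sinN_neg, sinProd_neg, neg_mul]

lemma f_add_g (x : ℝ) : f m x + g m x = √2 * sinN m (m + x) * sinProd m x := by
  rw [f, g, ← add_mul, cosN_add_sinN]

lemma f_nonneg {x : ℝ} (hx : |x| ≤ m) : 0 ≤ f m x :=
  mul_nonneg (cosN_nonneg (by linarith)) (sinProd_pos hx).le

lemma f_natCast_nonneg {n : ℕ} (hn : n < 4 * m) : 0 ≤ f m n := by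
  by_cases h1 : n ≤ m
  · exact f_nonneg (by rw [abs_of_nonneg n.cast_nonneg]; exact_mod_cast h1)
  by_cases h2 : n < 3 * m
  · rw [f, sinProd_natCast_eq_zero (by omega) h2, mul_zero]
  · have h3 : (3 * m : ℝ) ≤ n := by exact_mod_cast (by omega : 3 * m ≤ n)
    have h4 : (n : ℝ) < 4 * m := by exact_mod_cast hn
    rw [← f_periodic.sub_eq]
    exact f_nonneg (by rw [abs_le]; push_cast; constructor <;> linarith)

lemma fMod_even : (fMod m).Even :=
  (f_periodic.comp ofReal).even_comp_val fun x ↦ by simp only [Function.comp_apply, f_neg]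

lemma gMod_odd : (gMod m).Odd :=
  (g_periodic.comp ofReal).odd_comp_val fun x ↦ by simp only [Function.comp_apply, g_neg, ofReal_neg]

lemma fMod_add_I_smul_gMod_intCast (t : ℤ) :
    (fMod m + I • gMod m) t = halfChar m t * sinProd m t := by
  simp only [Pi.add_apply, Pi.smul_apply, smul_eq_mul, fMod, gMod]
  rw [f_periodic.apply_val_intCast, g_periodic.apply_val_intCast, f, g, halfChar_eq]
  push_cast
  ring

lemma fMod_add_gMod_intCast (t : ℤ) :
    (fMod m + gMod m) t = √2 * sinN m (m + t) * sinProd m t := by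
  simp only [Pi.add_apply, fMod, gMod]
  rw [f_periodic.apply_val_intCast, g_periodic.apply_val_intCast, ← ofReal_add, f_add_g]
  push_cast
  ring

/-- After multiplication by `halfChar m (-m)`, this is `2 i` times `sinN_mul_sinProd`. -/
lemma fMod_add_I_smul_gMod_recurrence (j : ZMod (4 * m)) :
    (I + -1 * stdAddChar (-j)) * (fMod m + I • gMod m) j =
      (-1 + I * stdAddChar (-(j - 1))) * (fMod m + I • gMod m) (j - 1) := by
  obtain ⟨t, rfl⟩ := ZMod.intCast_surjective j
  rw [show (t : ZMod (4 * m)) - 1 = ((t - 1 : ℤ) : ZMod (4 * m)) by push_cast; ring,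
    ← Int.cast_neg, ← Int.cast_neg, stdAddChar_intCast, stdAddChar_intCast,
    fMod_add_I_smul_gMod_intCast, fMod_add_I_smul_gMod_intCast]
  have key₁ : (I - halfChar m (2 * (-t : ℤ))) * halfChar m t =
      halfChar m m * (2 * I * sinN m (m + t)) := by
    rw [← halfChar_sub_halfChar_neg, ← halfChar_two_mul_m (m := m)]
    simp only [sub_mul, mul_sub, ← halfChar_add]
    push_cast
    ring_nf
  have key₂ : (-1 + I * halfChar m (2 * (-(t - 1) : ℤ))) * halfChar m (t - 1 : ℤ) =
      halfChar m m * (2 * I * sinN m (m + 1 - t)) := by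
    rw [← halfChar_sub_halfChar_neg, ← halfChar_two_mul_m (m := m)]
    simp only [add_mul, mul_sub, ← halfChar_add]
    push_cast
    ring_nf
  have hrec := congrArg (fun r : ℝ ↦ (r : ℂ)) (sinN_mul_sinProd (m := m) t)
  push_cast at hrec key₁ key₂ ⊢
  linear_combination (sinProd m t : ℂ) * key₁ - (sinProd m (t - 1) : ℂ) * key₂ +
    halfChar m m * 2 * I * hrec

lemma one_add_I_mul_halfChar (t : ℝ) :
    1 + I * halfChar m (2 * -t) = 2 * halfChar m (m - t) * sinN m (m + t) := by
  have : sinN m (m + t) = cosN m (m - t) := by rw [cosN_eq_sinN]; ring_nf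
  rw [this, mul_right_comm, ← halfChar_add_halfChar_neg, ← halfChar_two_mul_m (m := m)]
  simp only [add_mul, ← halfChar_add, neg_add_cancel, halfChar_zero]
  ring_nf

lemma I_add_halfChar (t : ℝ) :
    I + halfChar m (2 * -t) = 2 * halfChar m (m - t) * sinN m (m - t) := by
  have : sinN m (m - t) = cosN m (m + t) := by rw [cosN_eq_sinN]; ring_nf
  rw [this, mul_right_comm, ← halfChar_add_halfChar_neg, ← halfChar_two_mul_m (m := m)]
  simp only [add_mul, ← halfChar_add]
  ring_nf

lemma fMod_add_gMod_recurrence (k : ZMod (4 * m)) :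
    (fMod m + gMod m) (k + 1) * (-1 - I * stdAddChar (-k)) =
      (fMod m + gMod m) k * (-1 * stdAddChar (-k) - I) := by
  obtain ⟨t, rfl⟩ := ZMod.intCast_surjective k
  rw [show (t : ZMod (4 * m)) + 1 = ((t + 1 : ℤ) : ZMod (4 * m)) by push_cast; ring,
    ← Int.cast_neg, stdAddChar_intCast, fMod_add_gMod_intCast, fMod_add_gMod_intCast]
  have hA := one_add_I_mul_halfChar (m := m) t
  have hC := I_add_halfChar (m := m) t
  have hrec := congrArg (fun r : ℝ ↦ (r : ℂ)) (sinN_mul_sinProd (m := m) (t + 1))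
  rw [show (m : ℝ) + 1 - (t + 1) = m - t by ring, add_sub_cancel_right] at hrec
  push_cast at hrec hA hC ⊢
  linear_combination (-√2 * sinN m (m + (t + 1)) * sinProd m (t + 1) : ℂ) * hA
    + (√2 * sinN m (m + t) * sinProd m t : ℂ) * hC
    - (√2 * 2 * halfChar m (m - t) * sinN m (m + t) : ℂ) * hrec

lemma eq_three_mul_of_neg_one_sub_I_mul {k : ZMod (4 * m)} (h : -1 - I * stdAddChar (-k) = 0) :
    k = (3 * m : ℕ) := by
  have he : stdAddChar (-k) = stdAddChar (m : ZMod (4 * m)) := by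
    rw [stdAddChar_m]
    linear_combination I * h + stdAddChar (-k) * I_sq
  have hk := injective_stdAddChar he
  have h4 := natCast_self (4 * m)
  push_cast at h4 ⊢
  linear_combination -hk - h4

lemma eq_of_neg_stdAddChar_sub_I {k : ZMod (4 * m)} (h : -1 * stdAddChar (-k) - I = 0) :
    k = m := by
  have he : stdAddChar (-k) = stdAddChar (-(m : ZMod (4 * m))) := by
    rw [AddChar.map_neg_eq_inv stdAddChar (m : ZMod (4 * m)), stdAddChar_m, Complex.inv_I]
    linear_combination -h
  simpa using injective_stdAddChar he

lemma dft_fMod_add_I_smul_gMod :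
    ∃ κ : ℂ, 𝓕 (fMod m + I • gMod m) = κ • (fMod m + gMod m) := by
  have hW0 : (fMod m + gMod m) 0 ≠ 0 := by
    simp only [Pi.add_apply, fMod, gMod, val_zero, Nat.cast_zero, f_zero, g_zero,
      ofReal_zero, add_zero, ofReal_ne_zero]
    exact (sinProd_pos (by simp)).ne'
  exact ⟨_, eq_smul_of_recurrence (p := 3 * m) (q := m) (by omega)
    (by have := NeZero.pos m; omega) (fun _ ↦ eq_three_mul_of_neg_one_sub_I_mul)
    (fun _ ↦ eq_of_neg_stdAddChar_sub_I)
    (dft_mul_succ_eq_of_recurrence fMod_add_I_smul_gMod_recurrence)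
    fMod_add_gMod_recurrence hW0⟩

end SinProduct

theorem statement14 (m : ℕ) (hm : 1 ≤ m) (N : ℕ) (hN : N = 4 * m) :
    dft N (fun x : ZMod N =>
        ((Real.cos (Real.pi * (x.val : ℝ) / N) : ℝ) : ℂ) *
          ∏ k ∈ Finset.range (2 * m - 1),
            ((Real.sin (Real.pi * ((m : ℝ) + (k + 1) - (x.val : ℝ)) / N) : ℝ) : ℂ))
      = (Real.sqrt N : ℂ) • (fun x : ZMod N =>
        ((Real.cos (Real.pi * (x.val : ℝ) / N) : ℝ) : ℂ) *
          ∏ k ∈ Finset.range (2 * m - 1),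
            ((Real.sin (Real.pi * ((m : ℝ) + (k + 1) - (x.val : ℝ)) / N) : ℝ) : ℂ)) ∧
    dft N (fun x : ZMod N =>
        ((Real.sin (Real.pi * (x.val : ℝ) / N) : ℝ) : ℂ) *
          ∏ k ∈ Finset.range (2 * m - 1),
            ((Real.sin (Real.pi * ((m : ℝ) + (k + 1) - (x.val : ℝ)) / N) : ℝ) : ℂ))
      = (-Complex.I * (Real.sqrt N : ℂ)) • (fun x : ZMod N =>
        ((Real.sin (Real.pi * (x.val : ℝ) / N) : ℝ) : ℂ) *
          ∏ k ∈ Finset.range (2 * m - 1),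
            ((Real.sin (Real.pi * ((m : ℝ) + (k + 1) - (x.val : ℝ)) / N) : ℝ) : ℂ)) := by
  subst hN
  have : NeZero m := ⟨by omega⟩
  simp only [← SinProduct.fMod_apply, ← SinProduct.gMod_apply, dft_eq_zmodDFT]
  obtain ⟨κ, hκ⟩ := SinProduct.dft_fMod_add_I_smul_gMod (m := m)
  obtain ⟨hf, hg⟩ :=
    ZMod.dft_eq_smul_of_dft_add_I_smul SinProduct.fMod_even SinProduct.gMod_odd hκ
  have hκN : κ = Real.sqrt (4 * m : ℕ) :=
    ZMod.dft_eigenvalue_eq_sqrt (fun x ↦ SinProduct.f_natCast_nonneg (ZMod.val_lt x))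
      (by simpa [SinProduct.f_zero] using SinProduct.sinProd_pos (by simp)) hf
  exact hκN ▸ ⟨hf, hg⟩
end

section
/- Let N be a positive integer and a an integer with (N−2)/4 ≤ a ≤ (N−1)/2. Then there exist families of functions (v_y)_{y ∈ [−a,a]} and (w_y)_{y ∈ [−a,a]}, with each v_y, w_y : ℤ/Nℤ → ℂ, such that for every f : ℤ/Nℤ → ℂ and every x ∈ ℤ/Nℤ with x ∉ [−a,a], f(x) = ∑_{y ∈ [−a,a]} ( v_y(x) f(y) + w_y(x) (F_N f)(y) ). That is, the values of any function outside [−a,a] are reconstructed by a universal interpolation formula from the values of f and of F_N f on [−a,a]. -/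
open Complex

open Matrix in
private lemma vand_fin' {m : ℕ} (x : Fin m → ℂ) (hx : Function.Injective x)
    (c : Fin m → ℂ) (h : ∀ t : Fin m, ∑ j, c j * x j ^ (t : ℕ) = 0) : c = 0 := by
  have hdet : (Matrix.vandermonde x).det ≠ 0 := by
    rw [Matrix.det_vandermonde]
    refine Finset.prod_ne_zero_iff.2 fun i _ => Finset.prod_ne_zero_iff.2 fun j hj => ?_
    have hij : i ≠ j := fun h' => by
      subst h'; exact absurd (Finset.mem_Ioi.1 hj) (lt_irrefl _)
    exact sub_ne_zero.2 fun hxe => hij (hx hxe.symm)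
  have hM : ((Matrix.vandermonde x)ᵀ).det ≠ 0 := by rwa [Matrix.det_transpose]
  have hmv : ((Matrix.vandermonde x)ᵀ).mulVec c = 0 := by
    funext t
    simpa [Matrix.mulVec, Matrix.vandermonde, dotProduct, mul_comm] using h t
  exact Matrix.eq_zero_of_mulVec_eq_zero hM hmv

lemma mem_dInt {N : ℕ} [NeZero N] {a : ℤ} (h1 : 2 * a + 1 ≤ (N : ℤ)) (ha : 0 ≤ a)
    {j : ℕ} (hj : j < N) :
    (j : ZMod N) ∈ dInterval N a ↔ ((j : ℤ) ≤ a ∨ (N : ℤ) - a ≤ j) := by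
  constructor
  · rintro ⟨i, hi, hij⟩
    have hmod : ((N : ℤ)) ∣ (j : ℤ) - i := by
      have : (i : ZMod N) = ((j : ℤ) : ZMod N) := by rw [hij]; push_cast; rfl
      have h' := (ZMod.intCast_eq_intCast_iff i (j : ℤ) N).1 this
      exact (Int.ModEq.dvd h')
    obtain ⟨c, hc⟩ := hmod
    rw [abs_le] at hi
    have hc0 : 0 ≤ c := by nlinarith [hi.1, hi.2]
    have hc1 : c ≤ 1 := by nlinarith [hi.1, hi.2, (by exact_mod_cast hj : (j : ℤ) < N)]
    interval_cases c
    · left; omega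
    · right; omega
  · rintro (h | h)
    · exact ⟨(j : ℤ), by rwa [_root_.abs_of_nonneg (by positivity)], by push_cast; rfl⟩
    · refine ⟨(j : ℤ) - N, ?_, ?_⟩
      · rw [abs_le]; constructor <;> [omega; omega]
      · push_cast; simp

lemma kernel {N : ℕ} [NeZero N] {a : ℤ} (h2 : (N : ℤ) ≤ 4 * a + 2)
    (h1 : 2 * a + 1 ≤ (N : ℤ)) (f : ZMod N → ℂ)
    (hf : ∀ y ∈ dInterval N a, f y = 0)
    (hF : ∀ y ∈ dInterval N a, dft N f y = 0) : f = 0 := by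
  have hN : 0 < N := Nat.pos_of_ne_zero (NeZero.ne N)
  have hNz : (N : ℤ) ≥ 1 := by exact_mod_cast hN
  have ha : 0 ≤ a := by omega
  obtain ⟨b, rfl⟩ : ∃ b : ℕ, (b : ℤ) = a := ⟨a.toNat, Int.toNat_of_nonneg ha⟩
  have h1' : 2 * b + 1 ≤ N := by omega
  set ω : ℂ := Complex.exp (2 * Real.pi * Complex.I / N) with hω
  have hprim : IsPrimitiveRoot ω N := Complex.isPrimitiveRoot_exp N (NeZero.ne N)
  have hω0 : ω ≠ 0 := Complex.exp_ne_zero _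
  have hωmod : ∀ p q : ℤ, (N : ℤ) ∣ p - q → ω ^ p = ω ^ q := by
    rintro p q ⟨c, hc⟩
    have hpq : p = q + (N : ℤ) * c := by omega
    rw [hpq, zpow_add₀ hω0, _root_.zpow_mul, zpow_natCast, hprim.pow_eq_one, _root_.one_zpow, mul_one]
  have hexp : ∀ j v : ℕ,
      Complex.exp (-(2 * Real.pi * Complex.I * (j : ℂ) * (v : ℂ)) / (N : ℂ))
        = ω ^ (-((j : ℤ) * (v : ℤ))) := by
    intro j v
    rw [hω, ← Complex.exp_int_mul]
    congr 1
    push_cast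
    ring
  set m := N - b - (b + 1) with hm
  have hm2 : m ≤ 2 * b + 1 := by omega
  have hmN : m < N := by omega
  -- the vanishing-moment conditions
  have key : ∀ t : ℕ, t ≤ 2 * b →
      ∑ i : Fin m, (ω ^ (((b + 1 + (i : ℕ) : ℕ) : ℤ) * (b : ℤ)) * f (((b + 1 + (i : ℕ) : ℕ)) : ZMod N))
        * (ω ^ (-((b + 1 + (i : ℕ) : ℕ) : ℤ))) ^ t = 0 := by
    intro t ht
    set k : ℤ := (t : ℤ) - b with hk
    have hkI : ((k : ZMod N)) ∈ dInterval N b := ⟨k, by rw [abs_le]; omega, rfl⟩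
    have h0 := hF _ hkI
    set v : ℕ := ((k : ZMod N)).val with hv
    have hvk : (N : ℤ) ∣ (v : ℤ) - k := by
      have hvc : ((v : ℤ) : ZMod N) = ((k : ℤ) : ZMod N) := by
        push_cast
        rw [hv, ZMod.natCast_val, ZMod.cast_id]
      exact ((ZMod.intCast_eq_intCast_iff _ _ _).1 hvc).symm.dvd
    -- rewrite dft as restricted sum
    have hsub : Finset.Ico (b + 1) (N - b) ⊆ Finset.range N :=
      fun j hj => Finset.mem_range.2 (lt_of_lt_of_le (Finset.mem_Ico.1 hj).2 (by omega))
    have hstep1 : dft N f ((k : ZMod N)) =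
        ∑ j ∈ Finset.Ico (b + 1) (N - b),
          Complex.exp (-(2 * Real.pi * Complex.I * (j : ℂ) * (v : ℂ)) / (N : ℂ)) * f (j : ZMod N) := by
      rw [dft]
      refine (Finset.sum_subset hsub ?_).symm
      intro j hj hj'
      have hjN := Finset.mem_range.1 hj
      have hjI : (j : ZMod N) ∈ dInterval N b := by
        rw [mem_dInt h1 ha hjN]
        simp only [Finset.mem_Ico, not_and_or, not_le, not_lt] at hj'
        omega
      rw [hf _ hjI, mul_zero]
    have hstep2 : ∀ j : ℕ,
        Complex.exp (-(2 * Real.pi * Complex.I * (j : ℂ) * (v : ℂ)) / (N : ℂ)) * f (j : ZMod N)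
          = (ω ^ ((j : ℤ) * b) * f (j : ZMod N)) * (ω ^ (-(j : ℤ))) ^ t := by
      intro j
      rw [hexp j v]
      have e1 : ω ^ (-((j : ℤ) * (v : ℤ))) = ω ^ ((j : ℤ) * b + (-(j : ℤ)) * t) := by
        apply hωmod
        have : -((j : ℤ) * v) - ((j : ℤ) * b + (-(j : ℤ)) * t) = (j : ℤ) * (k - v) := by
          rw [hk]; ring
        rw [this]
        refine Dvd.dvd.mul_left ?_ _
        rw [← neg_sub]
        exact dvd_neg.mpr hvk
      have e2 : ω ^ ((-(j : ℤ)) * (t : ℤ)) = (ω ^ (-(j : ℤ))) ^ t := by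
        rw [_root_.zpow_mul, zpow_natCast]
      rw [e1, zpow_add₀ hω0, e2]
      ring
    rw [hstep1] at h0
    rw [Finset.sum_congr rfl (fun j _ => hstep2 j)] at h0
    rw [Finset.sum_Ico_eq_sum_range] at h0
    rw [← Fin.sum_univ_eq_sum_range] at h0
    exact h0
  -- apply Vandermonde
  have hX : Function.Injective (fun i : Fin m => ω ^ (-((b + 1 + (i : ℕ) : ℕ) : ℤ))) := by
    intro i i' hii
    have hii' : ω ^ (-((b + 1 + (i : ℕ) : ℕ) : ℤ)) = ω ^ (-((b + 1 + (i' : ℕ) : ℕ) : ℤ)) := hii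
    have hone : ω ^ ((-((b + 1 + (i : ℕ) : ℕ) : ℤ)) - (-((b + 1 + (i' : ℕ) : ℕ) : ℤ))) = 1 := by
      rw [zpow_sub₀ hω0, hii']
      exact div_self (zpow_ne_zero _ hω0)
    obtain ⟨c, hc⟩ := (hprim.zpow_eq_one_iff_dvd _).1 hone
    have hiZ : ((i : ℕ) : ℤ) < m := by exact_mod_cast i.2
    have hiZ' : ((i' : ℕ) : ℤ) < m := by exact_mod_cast i'.2
    have hiZ0 : (0 : ℤ) ≤ ((i : ℕ) : ℤ) := by positivity
    have hiZ0' : (0 : ℤ) ≤ ((i' : ℕ) : ℤ) := by positivity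
    have hmZ : (m : ℤ) < N := by exact_mod_cast hmN
    have hc' : ((i' : ℕ) : ℤ) - ((i : ℕ) : ℤ) = (N : ℤ) * c := by push_cast at hc ⊢; linarith
    have hc0 : c = 0 := by
      rcases lt_trichotomy c 0 with h | h | h
      · have hcc : (N : ℤ) * c ≤ (N : ℤ) * (-1) := by
          apply mul_le_mul_of_nonneg_left (by omega) (by positivity)
        linarith
      · exact h
      · have hcc : (N : ℤ) * 1 ≤ (N : ℤ) * c := by
          apply mul_le_mul_of_nonneg_left (by omega) (by positivity)
        linarith
    rw [hc0, mul_zero] at hc'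
    have : ((i : ℕ) : ℤ) = ((i' : ℕ) : ℤ) := by linarith
    exact Fin.ext (by exact_mod_cast this)
  have hC := vand_fin' _ hX _ (fun t => key t.1 (by omega))
  have hfi : ∀ i : Fin m, f (((b + 1 + (i : ℕ) : ℕ)) : ZMod N) = 0 := by
    intro i
    have := congrFun hC i
    simp only [Pi.zero_apply, mul_eq_zero] at this
    rcases this with h | h
    · exact absurd h (zpow_ne_zero _ hω0)
    · exact h
  -- conclude
  funext x
  have hxv : ((x.val : ℕ) : ZMod N) = x := ZMod.natCast_rightInverse x
  have hxlt : x.val < N := ZMod.val_lt x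
  by_cases hcase : x.val ≤ b ∨ N - b ≤ x.val
  · have : x ∈ dInterval N b := by
      rw [← hxv, mem_dInt h1 ha hxlt]
      omega
    simpa using hf _ this
  · push_neg at hcase
    have hi : x.val - (b + 1) < m := by omega
    have hval : b + 1 + (x.val - (b + 1)) = x.val := by omega
    have := hfi ⟨x.val - (b + 1), hi⟩
    simp only [] at this
    rw [hval, hxv] at this
    simpa using this


theorem statement17 (N : ℕ) [NeZero N] (a : ℤ) (h2 : (N : ℤ) ≤ 4 * a + 2)
    (h1 : 2 * a + 1 ≤ (N : ℤ)) :
    ∃ v w : ZMod N → ZMod N → ℂ,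
      (∀ y, y ∉ dInterval N a → v y = 0 ∧ w y = 0) ∧
      ∀ f : ZMod N → ℂ, ∀ x, x ∉ dInterval N a →
        f x = ∑ y : ZMod N, (v y x * f y + w y x * dft N f y) := by
  classical
  have hdft_add : ∀ f g : ZMod N → ℂ, dft N (f + g) = dft N f + dft N g := by
    intro f g; funext k
    simp only [dft, Pi.add_apply, mul_add, Finset.sum_add_distrib]
  have hdft_smul : ∀ (c : ℂ) (f : ZMod N → ℂ), dft N (c • f) = c • dft N f := by
    intro c f; funext k
    simp only [dft, Pi.smul_apply, smul_eq_mul, Finset.mul_sum]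
    refine Finset.sum_congr rfl fun j _ => by ring
  let T : (ZMod N → ℂ) →ₗ[ℂ] ((ZMod N → ℂ) × (ZMod N → ℂ)) :=
    { toFun := fun f => (fun y => if y ∈ dInterval N a then f y else 0,
                         fun y => if y ∈ dInterval N a then dft N f y else 0)
      map_add' := by
        intro f g
        refine Prod.ext ?_ ?_ <;> funext y <;>
          simp only [hdft_add, Pi.add_apply, Prod.fst_add, Prod.snd_add] <;>
          split_ifs <;> simp
      map_smul' := by
        intro c f
        refine Prod.ext ?_ ?_ <;> funext y <;>
          simp only [hdft_smul, Pi.smul_apply, smul_eq_mul, RingHom.id_apply,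
            Prod.smul_fst, Prod.smul_snd] <;>
          split_ifs <;> simp }
  have hker : LinearMap.ker T = ⊥ := by
    rw [LinearMap.ker_eq_bot']
    intro f hf0
    have h1f : ∀ y ∈ dInterval N a, f y = 0 := by
      intro y hy
      have := congrFun (congrArg Prod.fst hf0) y
      simpa [T, if_pos hy] using this
    have h2f : ∀ y ∈ dInterval N a, dft N f y = 0 := by
      intro y hy
      have := congrFun (congrArg Prod.snd hf0) y
      simpa [T, if_pos hy] using this
    exact kernel h2 h1 f h1f h2f
  obtain ⟨S, hS⟩ := T.exists_leftInverse_of_injective hker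
  set E1 : ZMod N → ((ZMod N → ℂ) × (ZMod N → ℂ)) :=
    fun y => (fun j => if y = j then 1 else 0, 0) with hE1
  set E2 : ZMod N → ((ZMod N → ℂ) × (ZMod N → ℂ)) :=
    fun y => (0, fun j => if y = j then 1 else 0) with hE2
  refine ⟨fun y x => if y ∈ dInterval N a then S (E1 y) x else 0,
          fun y x => if y ∈ dInterval N a then S (E2 y) x else 0, ?_, ?_⟩
  · intro y hy
    constructor <;> funext x <;> simp only [if_neg hy, Pi.zero_apply]
  · intro f x _
    have hdecomp : T f = ∑ y : ZMod N, ((T f).1 y • E1 y + (T f).2 y • E2 y) := by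
      refine Prod.ext ?_ ?_
      · funext j
        simp only [Prod.fst_sum, Prod.fst_add, Prod.smul_fst, hE1, hE2, smul_zero, add_zero,
          Finset.sum_apply, Pi.smul_apply, smul_eq_mul, mul_ite, mul_one, mul_zero]
        rw [Finset.sum_ite_eq' Finset.univ j fun y => (T f).1 y]
        simp
      · funext j
        simp only [Prod.snd_sum, Prod.snd_add, Prod.smul_snd, hE1, hE2, smul_zero, zero_add,
          Finset.sum_apply, Pi.smul_apply, smul_eq_mul, mul_ite, mul_one, mul_zero]
        rw [Finset.sum_ite_eq' Finset.univ j fun y => (T f).2 y]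
        simp
    have hfx : S (T f) = f := LinearMap.congr_fun hS f
    calc f x = S (T f) x := by rw [hfx]
      _ = ∑ y : ZMod N, ((T f).1 y * S (E1 y) x + (T f).2 y * S (E2 y) x) := by
          conv_lhs => rw [hdecomp]
          rw [map_sum]
          simp only [map_add, _root_.map_smul, Finset.sum_apply, Pi.add_apply, Pi.smul_apply,
            smul_eq_mul]
      _ = ∑ y : ZMod N, ((if y ∈ dInterval N a then S (E1 y) x else 0) * f y
            + (if y ∈ dInterval N a then S (E2 y) x else 0) * dft N f y) := by
          refine Finset.sum_congr rfl fun y _ => ?_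
          by_cases hy : y ∈ dInterval N a <;> simp [T, hy] <;> ring
end

section
/- Let N be a positive integer and τ a complex number with positive imaginary part. Define θ(·, τ) : ℤ/Nℤ → ℂ by θ(x, τ) = ∑_{n ∈ ℤ} exp(iπτ(x + nN)²/N) (the series converges absolutely and is N-periodic in the integer x, hence well-defined on ℤ/Nℤ). Then for every k ∈ ℤ/Nℤ (with integer representative k), (F_N θ(·, τ))(k) = ϑ(−k/N, τ/N), where ϑ(z, τ) = ∑_{n ∈ ℤ} exp(iπn²τ + 2πinz) is the Jacobi theta function. -/
open Complex

set_option maxHeartbeats 1000000 in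
theorem statement18 (N : ℕ) (hN : 0 < N) (τ : ℂ) (hτ : 0 < τ.im) (k : ZMod N) :
    dft N (fun x : ZMod N =>
        ∑' n : ℤ, Complex.exp (Complex.I * (Real.pi : ℂ) * τ * ((x.val : ℂ) + n * N) ^ 2 / N)) k
      = jacobiTheta₂ (-(k.val : ℂ) / N) (τ / N) := by
  haveI : NeZero N := ⟨hN.ne'⟩
  have hN0 : (N : ℂ) ≠ 0 := Nat.cast_ne_zero.mpr hN.ne'
  have hτ' : 0 < (τ / N).im := by
    rw [Complex.div_natCast_im]
    positivity
  set z : ℂ := -(k.val : ℂ) / N with hz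
  have hsum := (hasSum_jacobiTheta₂_term z hτ').summable
  have key : ∀ (m : ℤ) (j : ℕ), j < N →
      jacobiTheta₂_term (m * N + j) z (τ / N)
        = Complex.exp (-(2 * Real.pi * Complex.I * (j : ℂ) * (k.val : ℂ)) / (N : ℂ)) *
          Complex.exp (Complex.I * (Real.pi : ℂ) * τ * ((j : ℂ) + m * N) ^ 2 / N) := by
    intro m j hj
    rw [jacobiTheta₂_term, ← Complex.exp_add]
    have : 2 * ↑Real.pi * I * ((m * N + j : ℤ) : ℂ) * z +
        ↑Real.pi * I * ((m * N + j : ℤ) : ℂ) ^ 2 * (τ / N)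
        = (-(2 * Real.pi * Complex.I * (j : ℂ) * (k.val : ℂ)) / (N : ℂ) +
            Complex.I * (Real.pi : ℂ) * τ * ((j : ℂ) + m * N) ^ 2 / N)
          + ((-(m * (k.val : ℤ)) : ℤ) : ℂ) * (2 * Real.pi * I) := by
      rw [hz]
      push_cast
      field_simp
      ring
    rw [this, Complex.exp_add, Complex.exp_int_mul_two_pi_mul_I, mul_one]
  -- the equivalence Fin N × ℤ ≃ ℤ, (j, m) ↦ m * N + j
  set e : Fin N × ℤ ≃ ℤ := (Equiv.prodComm (Fin N) ℤ).trans (Int.divModEquiv N).symm with he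
  rw [jacobiTheta₂, ← e.tsum_eq]
  have hsum' : Summable fun p : Fin N × ℤ => jacobiTheta₂_term (e p) z (τ / N) :=
    e.summable_iff.mpr hsum
  rw [Summable.tsum_prod hsum', tsum_fintype]
  have step : ∀ i : Fin N, ∑' m : ℤ, jacobiTheta₂_term (e (i, m)) z (τ / N)
      = Complex.exp (-(2 * Real.pi * Complex.I * ((i : ℕ) : ℂ) * (k.val : ℂ)) / (N : ℂ)) *
        ∑' m : ℤ, Complex.exp (Complex.I * (Real.pi : ℂ) * τ * (((i : ℕ) : ℂ) + m * N) ^ 2 / N) := by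
    intro i
    rw [← tsum_mul_left]
    apply tsum_congr
    intro m
    have h1 : e (i, m) = m * N + (i : ℕ) := rfl
    rw [h1, key m i i.isLt]
  rw [Finset.sum_congr rfl (fun i _ => step i),
    Fin.sum_univ_eq_sum_range (fun j => Complex.exp (-(2 * Real.pi * Complex.I * (j : ℂ) * (k.val : ℂ)) / (N : ℂ)) *
      ∑' m : ℤ, Complex.exp (Complex.I * (Real.pi : ℂ) * τ * ((j : ℂ) + m * N) ^ 2 / N))]
  rw [dft]
  apply Finset.sum_congr rfl
  intro j hj
  rw [ZMod.val_natCast_of_lt (Finset.mem_range.mp hj)]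
end
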